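/- arXiv:1304.6704 — 5 statements merged into one kernel-verified Lean document; each statement's English description precedes it below -/
import Mathlib

section
/- Let G be a finite strongly connected directed multigraph. Suppose there is a vertex i with indeg(i) ≥ outdeg(i), and every vertex x ≠ i satisfies indeg(x) ≤ outdeg(x). Let τ_i⁺ be the first return time to i of the simple random walk on G started at i. Then E_i[τ_i⁺] ≤ (Σ_x outdeg(x) + outdeg(i) − indeg(i)) / outdeg(i). -/
open scoped ENNReal Classical

/-- Finite-horizon iterates whose supremum is the expected hitting time of `S`
for the Markov chain with transition kernel `P`. -/
noncomputable def hitIter {V : Type*} (P : V → V → ℝ≥0∞) (S : Set V) : ℕ → V → ℝ≥0∞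
  | 0 => fun _ => 0
  | (m + 1) => fun x => if x ∈ S then 0 else 1 + ∑' z, P x z * hitIter P S m z

/-- Expected hitting time `E_x[τ_S]` of the set `S`, started from `x`, defined as the
minimal nonnegative solution of the hitting-time equations (supremum of iterates). -/
noncomputable def hitExp {V : Type*} (P : V → V → ℝ≥0∞) (S : Set V) (x : V) : ℝ≥0∞ :=
  ⨆ m, hitIter P S m x

/-- Outdegree of `x` in a directed multigraph given by edge multiplicities `E`. -/
def outdeg {V : Type*} [Fintype V] (E : V → V → ℕ) (x : V) : ℕ := ∑ y, E x y

/-- Indegree of `x`. -/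
def indeg {V : Type*} [Fintype V] (E : V → V → ℕ) (x : V) : ℕ := ∑ y, E y x

/-- Transition kernel of the simple random walk on the multigraph `E`. -/
noncomputable def stepP {V : Type*} [Fintype V] (E : V → V → ℕ) (x y : V) : ℝ≥0∞ :=
  (E x y : ℝ≥0∞) / (outdeg E x : ℝ≥0∞)

/-- Expected return time `E_i[τ_i⁺]` of the simple random walk on `E`. -/
noncomputable def retExp {V : Type*} [Fintype V] (E : V → V → ℕ) (i : V) : ℝ≥0∞ :=
  1 + ∑' z, stepP E i z * hitExp (stepP E) {i} z

section Aux

open Finset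

variable {V : Type*} [Fintype V]

lemma hitIter_mono {P : V → V → ℝ≥0∞} {S : Set V} (m : ℕ) :
    hitIter P S m ≤ hitIter P S (m + 1) := by
  induction m with
  | zero => intro x; exact zero_le
  | succ m ih =>
    intro x
    show (if x ∈ S then 0 else 1 + ∑' z, P x z * hitIter P S m z) ≤
      (if x ∈ S then 0 else 1 + ∑' z, P x z * hitIter P S (m + 1) z)
    split
    · exact le_rfl
    · gcongr with z
      exact ih z

lemma hitIter_monotone {P : V → V → ℝ≥0∞} {S : Set V} (x : V) :
    Monotone fun m => hitIter P S m x :=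
  monotone_nat_of_le_succ fun m => hitIter_mono m x

lemma hitIter_mem {P : V → V → ℝ≥0∞} {S : Set V} (m : ℕ) {x : V} (hxS : x ∈ S) :
    hitIter P S m x = 0 := by
  cases m with
  | zero => rfl
  | succ m => show (if x ∈ S then _ else _) = 0; simp [hxS]

lemma hitIter_succ_not_mem {P : V → V → ℝ≥0∞} {S : Set V} (m : ℕ) {x : V} (hxS : x ∉ S) :
    hitIter P S (m + 1) x = 1 + ∑' z, P x z * hitIter P S m z := by
  show (if x ∈ S then _ else _) = _; simp [hxS]

lemma stepP_sum (E : V → V → ℕ) {x : V} (h0 : outdeg E x ≠ 0) :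
    ∑ z, stepP E x z = 1 := by
  simp only [stepP, div_eq_mul_inv, ← Finset.sum_mul, ← Nat.cast_sum]
  exact ENNReal.mul_inv_cancel (by exact_mod_cast h0) (ENNReal.natCast_ne_top _)

lemma hitIter_le (E : V → V → ℕ) (hpos : ∀ x : V, 0 < outdeg E x) (S : Set V) (m : ℕ) (x : V) :
    hitIter (stepP E) S m x ≤ (m : ℝ≥0∞) := by
  induction m generalizing x with
  | zero => simp [hitIter]
  | succ m ih =>
    by_cases hxS : x ∈ S
    · rw [hitIter_mem _ hxS]; exact zero_le
    · rw [hitIter_succ_not_mem _ hxS, tsum_fintype]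
      push_cast
      rw [add_comm (m : ℝ≥0∞) 1]
      gcongr
      calc ∑ z, stepP E x z * hitIter (stepP E) S m z
          ≤ ∑ z, stepP E x z * (m : ℝ≥0∞) := by gcongr with z; exact ih z
        _ = (∑ z, stepP E x z) * (m : ℝ≥0∞) := by rw [Finset.sum_mul]
        _ = (m : ℝ≥0∞) := by rw [stepP_sum E (hpos x).ne', one_mul]

lemma hitIter_ne_top (E : V → V → ℕ) (hpos : ∀ x : V, 0 < outdeg E x) (S : Set V)
    (m : ℕ) (x : V) : hitIter (stepP E) S m x ≠ ∞ :=
  ((hitIter_le E hpos S m x).trans_lt (ENNReal.natCast_lt_top m)).ne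

/-- For `x ≠ i` the one-step equation, multiplied through by `outdeg x`. -/
lemma hitIter_step (E : V → V → ℕ) (hpos : ∀ x : V, 0 < outdeg E x) (i : V) (m : ℕ)
    {x : V} (hxi : x ≠ i) :
    (outdeg E x : ℝ≥0∞) * hitIter (stepP E) {i} (m + 1) x =
      (outdeg E x : ℝ≥0∞) + ∑ z, (E x z : ℝ≥0∞) * hitIter (stepP E) {i} m z := by
  have hxS : x ∉ ({i} : Set V) := by simpa using hxi
  rw [hitIter_succ_not_mem _ hxS, tsum_fintype, mul_add, mul_one, Finset.mul_sum]
  congr 1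
  refine Finset.sum_congr rfl fun z _ => ?_
  rw [stepP, ← mul_assoc, ENNReal.mul_div_cancel (by exact_mod_cast (hpos x).ne')
    (ENNReal.natCast_ne_top _)]

/-- Key per-horizon estimate. -/
lemma key_estimate (E : V → V → ℕ) (hpos : ∀ x : V, 0 < outdeg E x) (i : V)
    (hx : ∀ x : V, x ≠ i → indeg E x ≤ outdeg E x) (m : ℕ) :
    (∑ z, (E i z : ℝ≥0∞) * hitIter (stepP E) {i} m z) + (indeg E i : ℝ≥0∞) ≤
      ∑ x, (outdeg E x : ℝ≥0∞) := by
  classical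
  set h : ℕ → V → ℝ≥0∞ := hitIter (stepP E) {i} with hh
  set Si : ℝ≥0∞ := ∑ z, (E i z : ℝ≥0∞) * h m z with hSi
  set A : ℝ≥0∞ := ∑ x ∈ univ.erase i, (outdeg E x : ℝ≥0∞) * h (m + 1) x with hA
  set T : ℝ≥0∞ := ∑ z ∈ univ.erase i, (indeg E z : ℝ≥0∞) * h m z with hT
  set Dd : ℝ≥0∞ := ∑ x ∈ univ.erase i, (outdeg E x : ℝ≥0∞) with hDd
  set Di : ℝ≥0∞ := ∑ x ∈ univ.erase i, (indeg E x : ℝ≥0∞) with hDi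
  have hmi : ∀ k, h k i = 0 := fun k => hitIter_mem k rfl
  -- equality: A + Si = Dd + T
  have eq2 : A + Si = Dd + T := by
    have : A = Dd + ∑ z, (∑ x ∈ univ.erase i, (E x z : ℝ≥0∞)) * h m z := by
      rw [hA, hDd]
      rw [Finset.sum_congr rfl fun x hxm =>
        hitIter_step E hpos i m (Finset.ne_of_mem_erase hxm)]
      rw [Finset.sum_add_distrib]
      congr 1
      rw [Finset.sum_comm]
      exact Finset.sum_congr rfl fun z _ => (Finset.sum_mul _ _ _).symm
    rw [this, add_assoc]
    congr 1
    rw [hSi, ← Finset.sum_add_distrib]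
    have : ∀ z, (∑ x ∈ univ.erase i, (E x z : ℝ≥0∞)) * h m z + (E i z : ℝ≥0∞) * h m z
        = (indeg E z : ℝ≥0∞) * h m z := by
      intro z
      rw [← add_mul, Finset.sum_erase_add _ _ (mem_univ i)]
      congr 1
      rw [indeg, Nat.cast_sum]
    rw [Finset.sum_congr rfl fun z _ => this z]
    rw [hT, ← Finset.sum_erase_add _ _ (mem_univ i), hmi, mul_zero, add_zero]
  -- inequality: T + Dd ≤ A + Di
  have ineq2 : T + Dd ≤ A + Di := by
    rw [hT, hDd, hA, hDi, ← Finset.sum_add_distrib, ← Finset.sum_add_distrib]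
    refine Finset.sum_le_sum fun x hxm => ?_
    have hxi : x ≠ i := Finset.ne_of_mem_erase hxm
    have hle : indeg E x ≤ outdeg E x := hx x hxi
    have hcast : (outdeg E x : ℝ≥0∞) =
        (indeg E x : ℝ≥0∞) + ((outdeg E x - indeg E x : ℕ) : ℝ≥0∞) := by
      rw [← Nat.cast_add, Nat.add_sub_cancel' hle]
    have h1 : (1 : ℝ≥0∞) ≤ h (m + 1) x := by
      have hxS : x ∉ ({i} : Set V) := by simpa using hxi
      rw [hh, hitIter_succ_not_mem _ hxS]
      exact le_self_add
    have hmono : h m x ≤ h (m + 1) x := hitIter_mono m x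
    rw [hcast]
    calc (indeg E x : ℝ≥0∞) * h m x + ((indeg E x : ℝ≥0∞) + _)
        = ((indeg E x : ℝ≥0∞) * h m x + ((outdeg E x - indeg E x : ℕ) : ℝ≥0∞) * 1)
            + (indeg E x : ℝ≥0∞) := by ring
      _ ≤ ((indeg E x : ℝ≥0∞) * h (m + 1) x
            + ((outdeg E x - indeg E x : ℕ) : ℝ≥0∞) * h (m + 1) x)
            + (indeg E x : ℝ≥0∞) := by gcongr
      _ = ((indeg E x : ℝ≥0∞) + ((outdeg E x - indeg E x : ℕ) : ℝ≥0∞)) * h (m + 1) x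
            + (indeg E x : ℝ≥0∞) := by ring
  -- cancellation
  have hTD_ne : T + Dd ≠ ∞ := by
    refine ENNReal.add_ne_top.2 ⟨?_, ?_⟩
    · rw [hT]
      refine ENNReal.sum_ne_top.2 fun z _ => ENNReal.mul_ne_top
        (ENNReal.natCast_ne_top _) (hitIter_ne_top E hpos _ m z)
    · exact ENNReal.sum_ne_top.2 fun z _ => ENNReal.natCast_ne_top _
  have hDieq : Di + (indeg E i : ℝ≥0∞) = ∑ x, (outdeg E x : ℝ≥0∞) := by
    rw [hDi, Finset.sum_erase_add _ _ (mem_univ i)]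
    have : ∑ x, (indeg E x : ℝ≥0∞) = ∑ x, (outdeg E x : ℝ≥0∞) := by
      simp only [indeg, outdeg, Nat.cast_sum]
      exact Finset.sum_comm
    exact this
  have main : (T + Dd) + (Si + (indeg E i : ℝ≥0∞)) ≤
      (T + Dd) + ∑ x, (outdeg E x : ℝ≥0∞) := by
    calc (T + Dd) + (Si + (indeg E i : ℝ≥0∞))
        = (T + Dd) + Si + (indeg E i : ℝ≥0∞) := by ring
      _ ≤ (A + Di) + Si + (indeg E i : ℝ≥0∞) := by gcongr
      _ = (A + Si) + (Di + (indeg E i : ℝ≥0∞)) := by ring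
      _ = (Dd + T) + ∑ x, (outdeg E x : ℝ≥0∞) := by rw [eq2, hDieq]
      _ = (T + Dd) + ∑ x, (outdeg E x : ℝ≥0∞) := by ring
  exact (ENNReal.add_le_add_iff_left hTD_ne).1 main

end Aux

/-- Expected return time bound for a strongly connected multigraph with
`indeg i ≥ outdeg i` and `indeg x ≤ outdeg x` for all `x ≠ i`. -/
theorem return_time_bound
    {V : Type*} [Fintype V] (E : V → V → ℕ)
    (hpos : ∀ x : V, 0 < outdeg E x)
    (hsc : ∀ x y : V, Relation.ReflTransGen (fun a b => 0 < E a b) x y)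
    (i : V)
    (hi : outdeg E i ≤ indeg E i)
    (hx : ∀ x : V, x ≠ i → indeg E x ≤ outdeg E x) :
    retExp E i ≤
      (((∑ x, outdeg E x) + outdeg E i - indeg E i : ℕ) : ℝ≥0∞) /
        (outdeg E i : ℝ≥0∞) := by
  classical
  set h : ℕ → V → ℝ≥0∞ := hitIter (stepP E) {i} with hh
  have hd0 : (outdeg E i : ℝ≥0∞) ≠ 0 := by exact_mod_cast (hpos i).ne'
  have hdt : (outdeg E i : ℝ≥0∞) ≠ ∞ := ENNReal.natCast_ne_top _
  rw [retExp, tsum_fintype]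
  have hexp : ∀ z, hitExp (stepP E) {i} z = ⨆ m, h m z := fun z => rfl
  have step1 : ∑ z, stepP E i z * hitExp (stepP E) {i} z =
      ⨆ m, ∑ z, stepP E i z * h m z := by
    simp_rw [hexp, ENNReal.mul_iSup]
    exact ENNReal.finsetSum_iSup_of_monotone fun z a b hab =>
      mul_le_mul_right (hitIter_monotone z hab) _
  rw [step1, ENNReal.add_iSup]
  refine iSup_le fun m => ?_
  -- rewrite the sum as (∑ E i z * h m z) / outdeg i
  have step2 : ∑ z, stepP E i z * h m z =
      (∑ z, (E i z : ℝ≥0∞) * h m z) * (outdeg E i : ℝ≥0∞)⁻¹ := by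
    rw [Finset.sum_mul]
    refine Finset.sum_congr rfl fun z _ => ?_
    rw [stepP, div_eq_mul_inv]
    ring
  rw [step2]
  have hkey := key_estimate E hpos i hx m
  have hindle : indeg E i ≤ ∑ x, outdeg E x := by
    have h1 : indeg E i ≤ ∑ x, indeg E x :=
      Finset.single_le_sum (f := fun x => indeg E x) (fun _ _ => Nat.zero_le _)
        (Finset.mem_univ i)
    have h2 : ∑ x, indeg E x = ∑ x, outdeg E x := by
      simp only [indeg, outdeg]; exact Finset.sum_comm
    omega
  have hcast : (((∑ x, outdeg E x) + outdeg E i - indeg E i : ℕ) : ℝ≥0∞) =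
      ((∑ x, outdeg E x : ℕ) : ℝ≥0∞) + (outdeg E i : ℝ≥0∞) - (indeg E i : ℝ≥0∞) := by
    rw [ENNReal.natCast_sub, Nat.cast_add]
  rw [hcast, div_eq_mul_inv]
  calc 1 + (∑ z, (E i z : ℝ≥0∞) * h m z) * (outdeg E i : ℝ≥0∞)⁻¹
      = ((outdeg E i : ℝ≥0∞) + ∑ z, (E i z : ℝ≥0∞) * h m z) * (outdeg E i : ℝ≥0∞)⁻¹ := by
        rw [add_mul, ENNReal.mul_inv_cancel hd0 hdt]
    _ ≤ (((∑ x, outdeg E x : ℕ) : ℝ≥0∞) + (outdeg E i : ℝ≥0∞) - (indeg E i : ℝ≥0∞))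
          * (outdeg E i : ℝ≥0∞)⁻¹ := by
        gcongr
        refine ENNReal.le_sub_of_add_le_left (ENNReal.natCast_ne_top _) ?_
        calc (indeg E i : ℝ≥0∞) + ((outdeg E i : ℝ≥0∞) + ∑ z, (E i z : ℝ≥0∞) * h m z)
            = ((∑ z, (E i z : ℝ≥0∞) * h m z) + (indeg E i : ℝ≥0∞))
              + (outdeg E i : ℝ≥0∞) := by ring
          _ ≤ (∑ x, (outdeg E x : ℝ≥0∞)) + (outdeg E i : ℝ≥0∞) := by gcongr
          _ = ((∑ x, outdeg E x : ℕ) : ℝ≥0∞) + (outdeg E i : ℝ≥0∞) := by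
              rw [Nat.cast_sum]
end

section
/- Let G be a strongly connected directed multigraph with indeg(x) = outdeg(x) for all x, and let u be a vertex with i an in-neighbour of u. Construct G_i by deleting u and all its incident edges, then adding for each other in-neighbour j of u an edge from j to i for each deleted edge (j,u), so that outdegrees of vertices other than i are preserved. Let A_i be the set of vertices reachable from i in G_i, and let (A_i, E_i) be the induced subgraph. Then (A_i, E_i) is strongly connected and contains i; moreover for every x ∈ A_i with x ≠ i one has outdeg_{A_i}(x) = outdeg_G(x) and indeg_{A_i}(x) ≤ indeg_G(x), and if r_i is the number of edges from i to u in G then outdeg_{A_i}(i) = outdeg_G(i) − r_i and indeg_{A_i}(i) ≥ outdeg_{A_i}(i). -/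
open scoped Classical

/-- The graph `G_i`: delete the vertex `u` together with all its incident edges, and
for every other in-neighbour `j ≠ i` of `u` redirect each deleted edge `(j,u)` into an
edge from `j` to `i`. -/
def Gi {V : Type*} [DecidableEq V] (E : V → V → ℕ) (u i : V) (x y : V) : ℕ :=
  if x = u ∨ y = u then 0
  else E x y + (if y = i ∧ x ≠ i then E x u else 0)

/-- The set `A_i` of vertices reachable from `i` in `G_i`. -/
def setA {V : Type*} [DecidableEq V] (E : V → V → ℕ) (u i : V) : Set V :=
  {x | Relation.ReflTransGen (fun a b => 0 < Gi E u i a b) i x}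

/-- Edge multiplicities of the subgraph of `G_i` induced by `A_i`. -/
noncomputable def EA {V : Type*} [DecidableEq V] (E : V → V → ℕ) (u i : V) (x y : V) : ℕ :=
  if x ∈ setA E u i ∧ y ∈ setA E u i then Gi E u i x y else 0

/- ------------ auxiliary lemmas ------------- -/

lemma rtg_mem_of_closed {V : Type*} {g : V → V → Prop} {A : Set V}
    (hcl : ∀ ⦃a b⦄, a ∈ A → g a b → b ∈ A) {x y : V} (hx : x ∈ A)
    (h : Relation.ReflTransGen g x y) : y ∈ A := by
  induction h with
  | refl => exact hx
  | tail _ hq ih => exact hcl ih hq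

lemma rtg_lift {V : Type*} {g : V → V → Prop} {A : Set V}
    (hcl : ∀ ⦃a b⦄, a ∈ A → g a b → b ∈ A) {x y : V} (hx : x ∈ A)
    (h : Relation.ReflTransGen g x y) :
    Relation.ReflTransGen (fun a b => a ∈ A ∧ b ∈ A ∧ g a b) x y := by
  induction h with
  | refl => exact .refl
  | tail hp hq ih =>
    exact ih.tail ⟨rtg_mem_of_closed hcl hx hp, hcl (rtg_mem_of_closed hcl hx hp) hq, hq⟩

lemma rtg_crossing {V : Type*} {g : V → V → Prop} {R : Set V} {a b : V}
    (ha : a ∉ R) (h : Relation.ReflTransGen g a b) :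
    b ∈ R → ∃ c d, c ∉ R ∧ d ∈ R ∧ g c d := by
  induction h with
  | refl => exact fun hb => absurd hb ha
  | @tail p q hp hq ih =>
    intro hq'
    by_cases hpR : p ∈ R
    · exact ih hpR
    · exact ⟨p, q, hpR, hq', hq⟩

section Graph
variable {V : Type*} [Fintype V] [DecidableEq V] (E : V → V → ℕ) (u i : V)

lemma u_not_setA (hne : i ≠ u) : u ∉ setA E u i := by
  intro h
  rcases Relation.ReflTransGen.cases_tail h with h | ⟨b, _, hb⟩
  · exact hne h.symm
  · simp [Gi] at hb

lemma setA_tail {x y : V} (hx : x ∈ setA E u i) (h : 0 < Gi E u i x y) : y ∈ setA E u i :=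
  Relation.ReflTransGen.tail hx h

lemma outdeg_Gi_ne (x : V) (hne : i ≠ u) (hxu : x ≠ u) (hxi : x ≠ i) :
    outdeg (Gi E u i) x = outdeg E x := by
  have key : ∀ y, Gi E u i x y + (if y = u then E x u else 0)
      = E x y + (if y = i then E x u else 0) := by
    intro y
    unfold Gi
    by_cases hy : y = u
    · subst hy; simp [hxu, hne.symm, Ne.symm hne]
    · by_cases hyi : y = i <;> simp [hxu, hy, hyi, hxi, hne]
  have hsum := Finset.sum_congr rfl fun y (_ : y ∈ Finset.univ) => key y
  simp only [Finset.sum_add_distrib, Finset.sum_ite_eq', Finset.mem_univ, if_true] at hsum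
  unfold outdeg
  omega

lemma outdeg_Gi_i (hne : i ≠ u) :
    outdeg (Gi E u i) i + E i u = outdeg E i := by
  have key : ∀ y, Gi E u i i y + (if y = u then E i u else 0) = E i y := by
    intro y
    unfold Gi
    by_cases hy : y = u
    · subst hy; simp [Ne.symm hne]
    · simp [hy, hne]
  have hsum := Finset.sum_congr rfl fun y (_ : y ∈ Finset.univ) => key y
  simp only [Finset.sum_add_distrib, Finset.sum_ite_eq', Finset.mem_univ, if_true] at hsum
  unfold outdeg
  exact hsum

lemma indeg_Gi_le (x : V) (hxi : x ≠ i) : indeg (Gi E u i) x ≤ indeg E x := by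
  unfold indeg
  apply Finset.sum_le_sum
  intro a _
  unfold Gi
  split
  · omega
  · simp [hxi]

lemma EA_le_Gi (x y : V) : EA E u i x y ≤ Gi E u i x y := by
  unfold EA; split <;> omega

lemma outdeg_EA_eq (x : V) (hx : x ∈ setA E u i) :
    outdeg (EA E u i) x = outdeg (Gi E u i) x := by
  unfold outdeg
  apply Finset.sum_congr rfl
  intro y _
  rcases Nat.eq_zero_or_pos (Gi E u i x y) with h | h
  · simp [EA, h]
  · have hy : y ∈ setA E u i := setA_tail E u i hx h
    simp [EA, hx, hy]

lemma indeg_EA_le (x : V) : indeg (EA E u i) x ≤ indeg (Gi E u i) x := by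
  unfold indeg
  exact Finset.sum_le_sum fun a _ => EA_le_Gi E u i a x

end Graph

/-- Properties of the induced subgraph `(A_i, E_i)`: it contains `i`, is strongly
connected, outdegrees away from `i` are preserved, indegrees do not increase, the
outdegree of `i` drops by `r_i = E i u`, and `indeg(i) ≥ outdeg(i)` in `A_i`. -/
theorem induced_subgraph_properties
    {V : Type*} [Fintype V] [DecidableEq V] (E : V → V → ℕ) (u i : V)
    (hne : i ≠ u)
    (hin : 0 < E i u)
    (hsc : ∀ x y : V, Relation.ReflTransGen (fun a b => 0 < E a b) x y)
    (hbal : ∀ x : V, indeg E x = outdeg E x) :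
    i ∈ setA E u i ∧
    (∀ x ∈ setA E u i, ∀ y ∈ setA E u i,
      Relation.ReflTransGen
        (fun a b => a ∈ setA E u i ∧ b ∈ setA E u i ∧ 0 < Gi E u i a b) x y) ∧
    (∀ x ∈ setA E u i, x ≠ i →
      outdeg (EA E u i) x = outdeg E x ∧ indeg (EA E u i) x ≤ indeg E x) ∧
    outdeg (EA E u i) i = outdeg E i - E i u ∧
    outdeg (EA E u i) i ≤ indeg (EA E u i) i := by
  have hiA : i ∈ setA E u i := Relation.ReflTransGen.refl
  have hclosed : ∀ ⦃a b : V⦄, a ∈ setA E u i → (0 < Gi E u i a b) → b ∈ setA E u i :=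
    fun a b ha h => setA_tail E u i ha h
  have huA : u ∉ setA E u i := u_not_setA E u i hne
  -- every vertex of A reaches i back inside G_i
  have hback : ∀ x ∈ setA E u i, Relation.ReflTransGen (fun a b => 0 < Gi E u i a b) x i := by
    intro x hx
    set g := fun a b => 0 < Gi E u i a b with hg
    set R : Set V := {v | Relation.ReflTransGen g x v} with hR
    have hxR : x ∈ R := Relation.ReflTransGen.refl
    have hRA : ∀ v ∈ R, v ∈ setA E u i := fun v hv =>
      rtg_mem_of_closed hclosed hx hv
    by_contra hiR'
    have hiR : i ∉ R := hiR'
    set T : Finset V := Finset.univ.filter (· ∈ R) with hT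
    have hmemT : ∀ v, v ∈ T ↔ v ∈ R := by intro v; simp [hT]
    have hvi : ∀ v ∈ T, v ≠ i := fun v hv hvi => hiR (hvi ▸ (hmemT v).1 hv)
    have hvu : ∀ v ∈ T, v ≠ u := fun v hv hvu => huA (hvu ▸ hRA v ((hmemT v).1 hv))
    have hout : ∀ v ∈ T, outdeg (Gi E u i) v = outdeg E v := fun v hv =>
      outdeg_Gi_ne E u i v hne (hvu v hv) (hvi v hv)
    have hinle : ∀ v ∈ T, indeg (Gi E u i) v ≤ indeg E v := fun v hv =>
      indeg_Gi_le E u i v (hvi v hv)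
    have h1 : ∀ v ∈ T, outdeg (Gi E u i) v = ∑ w ∈ T, Gi E u i v w := by
      intro v hv
      unfold outdeg
      symm
      apply Finset.sum_subset (Finset.subset_univ T)
      intro w _ hw
      by_contra h
      exact hw ((hmemT w).2 (Relation.ReflTransGen.tail ((hmemT v).1 hv)
        (Nat.pos_of_ne_zero h)))
    have h2 : ∀ v ∈ T, (∑ w ∈ T, Gi E u i w v) ≤ indeg (Gi E u i) v := by
      intro v _
      unfold indeg
      exact Finset.sum_le_sum_of_subset (Finset.subset_univ T)
    have hchain : ∑ v ∈ T, indeg (Gi E u i) v ≤ ∑ v ∈ T, ∑ w ∈ T, Gi E u i w v := by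
      calc ∑ v ∈ T, indeg (Gi E u i) v ≤ ∑ v ∈ T, indeg E v := Finset.sum_le_sum hinle
        _ = ∑ v ∈ T, outdeg E v := Finset.sum_congr rfl (fun v _ => hbal v)
        _ = ∑ v ∈ T, outdeg (Gi E u i) v := (Finset.sum_congr rfl hout).symm
        _ = ∑ v ∈ T, ∑ w ∈ T, Gi E u i v w := Finset.sum_congr rfl h1
        _ = ∑ v ∈ T, ∑ w ∈ T, Gi E u i w v := Finset.sum_comm
    have heq : ∑ v ∈ T, ∑ w ∈ T, Gi E u i w v = ∑ v ∈ T, indeg (Gi E u i) v :=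
      le_antisymm (Finset.sum_le_sum h2) hchain
    have hpereq : ∀ v ∈ T, (∑ w ∈ T, Gi E u i w v) = indeg (Gi E u i) v :=
      (Finset.sum_eq_sum_iff_of_le h2).1 heq
    have hnocross : ∀ c, c ∉ R → ∀ d ∈ R, Gi E u i c d = 0 := by
      intro c hc d hd
      have hdT : d ∈ T := (hmemT d).2 hd
      have hpe := hpereq d hdT
      unfold indeg at hpe
      have h' := Finset.sum_sdiff (f := fun w => Gi E u i w d) (Finset.subset_univ T)
      beta_reduce at h'
      have hsd : ∑ w ∈ Finset.univ \ T, Gi E u i w d = 0 := by omega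
      have hcT : c ∈ Finset.univ \ T := by
        simp only [Finset.mem_sdiff, Finset.mem_univ, true_and]
        exact fun h => hc ((hmemT c).1 h)
      exact (Finset.sum_eq_zero_iff.1 hsd) c hcT
    obtain ⟨c, d, hc, hd, hcd⟩ := rtg_crossing hiR hx hxR
    have hcd' : 0 < Gi E u i c d := hcd
    have := hnocross c hc d hd
    omega
  have hconn : ∀ x ∈ setA E u i, ∀ y ∈ setA E u i,
      Relation.ReflTransGen
        (fun a b => a ∈ setA E u i ∧ b ∈ setA E u i ∧ 0 < Gi E u i a b) x y := by
    intro x hx y hy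
    exact (rtg_lift hclosed hx (hback x hx)).trans (rtg_lift hclosed hiA hy)
  have hdeg : ∀ x ∈ setA E u i, x ≠ i →
      outdeg (EA E u i) x = outdeg E x ∧ indeg (EA E u i) x ≤ indeg E x := by
    intro x hx hxi
    have hxu : x ≠ u := fun h => huA (h ▸ hx)
    refine ⟨?_, ?_⟩
    · rw [outdeg_EA_eq E u i x hx, outdeg_Gi_ne E u i x hne hxu hxi]
    · exact le_trans (indeg_EA_le E u i x) (indeg_Gi_le E u i x hxi)
  have houti : outdeg (EA E u i) i + E i u = outdeg E i := by
    rw [outdeg_EA_eq E u i i hiA]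
    exact outdeg_Gi_i E u i hne
  refine ⟨hiA, hconn, hdeg, by omega, ?_⟩
  -- counting over S = A
  set S : Finset V := Finset.univ.filter (· ∈ setA E u i) with hSdef
  have hiS : i ∈ S := by simp [hSdef, hiA]
  have hEA0 : ∀ x y : V, x ∉ setA E u i ∨ y ∉ setA E u i → EA E u i x y = 0 := by
    intro x y h
    unfold EA
    rcases h with h | h <;> simp [h]
  have houtS : ∑ x ∈ S, outdeg (EA E u i) x = ∑ x ∈ S, indeg (EA E u i) x := by
    unfold outdeg indeg
    have hl : ∑ x ∈ S, ∑ y, EA E u i x y = ∑ x, ∑ y, EA E u i x y := by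
      apply Finset.sum_subset (Finset.subset_univ S)
      intro x _ hx
      exact Finset.sum_eq_zero fun y _ => hEA0 x y (Or.inl (by simpa [hSdef] using hx))
    have hr : ∑ x ∈ S, ∑ y, EA E u i y x = ∑ x, ∑ y, EA E u i y x := by
      apply Finset.sum_subset (Finset.subset_univ S)
      intro x _ hx
      exact Finset.sum_eq_zero fun y _ => hEA0 y x (Or.inr (by simpa [hSdef] using hx))
    rw [hl, hr, Finset.sum_comm]
  have herase : ∑ x ∈ S.erase i, indeg (EA E u i) x ≤ ∑ x ∈ S.erase i, outdeg (EA E u i) x := by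
    apply Finset.sum_le_sum
    intro x hx
    have hxS := Finset.mem_of_mem_erase hx
    have hxi := Finset.ne_of_mem_erase hx
    have hxA : x ∈ setA E u i := by simpa [hSdef] using hxS
    obtain ⟨ho, hi'⟩ := hdeg x hxA hxi
    rw [ho]
    calc indeg (EA E u i) x ≤ indeg E x := hi'
      _ = outdeg E x := hbal x
  have e1 : outdeg (EA E u i) i + ∑ x ∈ S.erase i, outdeg (EA E u i) x
      = ∑ x ∈ S, outdeg (EA E u i) x := Finset.add_sum_erase S _ hiS
  have e2 : indeg (EA E u i) i + ∑ x ∈ S.erase i, indeg (EA E u i) x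
      = ∑ x ∈ S, indeg (EA E u i) x := Finset.add_sum_erase S _ hiS
  omega
end

section
/- Let G be a strongly connected directed multigraph on n vertices in which every vertex has indegree and outdegree equal to d ≥ 2. Fix a vertex u, let I_u be the set of vertices having at least one edge into u, and let μ be any probability measure supported on I_u. If τ_u is the first hitting time of u by the simple random walk on G started from μ, then E_μ[τ_u] ≤ nd − d. -/
open scoped ENNReal Classical

namespace RWAux
open Finset

variable {V : Type*} [Fintype V]

/-- matrix power of a kernel -/
noncomputable def Pw (K : V → V → ℝ≥0∞) : ℕ → V → V → ℝ≥0∞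
  | 0 => fun x z => if x = z then 1 else 0
  | (k+1) => fun x z => ∑ w, K x w * Pw K k w z

lemma Pw_succ_right (K : V → V → ℝ≥0∞) (k : ℕ) (x z : V) :
    Pw K (k+1) x z = ∑ w, Pw K k x w * K w z := by
  induction k generalizing x z with
  | zero =>
      simp [Pw]
  | succ k ih =>
      show ∑ w, K x w * Pw K (k+1) w z = _
      calc ∑ w, K x w * Pw K (k+1) w z
          = ∑ w, K x w * ∑ v, Pw K k w v * K v z := by simp_rw [ih]
        _ = ∑ w, ∑ v, K x w * (Pw K k w v * K v z) := by simp_rw [Finset.mul_sum]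
        _ = ∑ v, (∑ w, K x w * Pw K k w v) * K v z := by
              rw [Finset.sum_comm]; simp_rw [Finset.sum_mul, mul_assoc]
        _ = ∑ v, Pw K (k+1) x v * K v z := rfl

lemma Pw_transpose (K : V → V → ℝ≥0∞) (k : ℕ) (x z : V) :
    Pw K k x z = Pw (fun a b => K b a) k z x := by
  induction k generalizing x z with
  | zero => simp [Pw, eq_comm]
  | succ k ih =>
      show ∑ w, K x w * Pw K k w z = _
      rw [Pw_succ_right]
      exact Finset.sum_congr rfl fun w _ => by rw [ih, mul_comm]

section Main

variable (E : V → V → ℕ) (d : ℕ) (u : V)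

/-- forward kernel killed at u -/
noncomputable def Q : V → V → ℝ≥0∞ := fun x z => if z = u then 0 else stepP E x z

/-- transposed killed kernel -/
noncomputable def Qt : V → V → ℝ≥0∞ := fun z w => Q E u w z

variable {E d u}
variable (hd : 2 ≤ d) (hout : ∀ x : V, outdeg E x = d) (hin : ∀ x : V, indeg E x = d)

include hd in
lemma dcast_ne_zero : (d : ℝ≥0∞) ≠ 0 := by
  exact_mod_cast Nat.cast_ne_zero.2 (by omega)

include hd hout in
lemma row_sum_P (w : V) : ∑ z, stepP E w z = 1 := by
  have h1 : ∑ z, stepP E w z = (∑ z, (E w z : ℝ≥0∞)) * (d : ℝ≥0∞)⁻¹ := by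
    rw [Finset.sum_mul]
    refine Finset.sum_congr rfl fun z _ => ?_
    rw [stepP, hout, div_eq_mul_inv]
  rw [h1]
  have h2 : (∑ z, (E w z : ℝ≥0∞)) = (d : ℝ≥0∞) := by
    rw [← Nat.cast_sum]
    exact congrArg _ (hout w)
  rw [h2]
  exact ENNReal.mul_inv_cancel (dcast_ne_zero hd) (ENNReal.natCast_ne_top d)

include hd hout hin in
lemma col_sum_P (z : V) : ∑ w, stepP E w z = 1 := by
  have h1 : ∑ w, stepP E w z = (∑ w, (E w z : ℝ≥0∞)) * (d : ℝ≥0∞)⁻¹ := by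
    rw [Finset.sum_mul]
    refine Finset.sum_congr rfl fun w _ => ?_
    rw [stepP, hout, div_eq_mul_inv]
  rw [h1]
  have h2 : (∑ w, (E w z : ℝ≥0∞)) = (d : ℝ≥0∞) := by
    rw [← Nat.cast_sum]
    exact congrArg _ (hin z)
  rw [h2]
  exact ENNReal.mul_inv_cancel (dcast_ne_zero hd) (ENNReal.natCast_ne_top d)

include hd hout in
lemma Q_row (w : V) : (∑ z, Q E u w z) + stepP E w u = 1 := by
  have hsplit : ∑ z, (Q E u w z + if z = u then stepP E w z else 0) = 1 := by
    have : ∀ z : V, Q E u w z + (if z = u then stepP E w z else 0) = stepP E w z := by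
      intro z; by_cases h : z = u <;> simp [Q, h]
    simp_rw [this]
    exact row_sum_P hd hout w
  rw [Finset.sum_add_distrib, Finset.sum_ite_eq' univ u] at hsplit
  simpa using hsplit

include hd hout hin in
lemma Qt_row {z : V} (hz : z ≠ u) : ∑ w, Qt E u z w = 1 := by
  have : ∀ w : V, Qt E u z w = stepP E w z := by
    intro w; simp [Qt, Q, hz]
  simp_rw [this]
  exact col_sum_P hd hout hin z

lemma Qt_u (w : V) : Qt E u u w = 0 := by simp [Qt, Q]

include hd hout hin in
lemma Qt_row_le (z : V) : ∑ w, Qt E u z w ≤ 1 := by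
  by_cases hz : z = u
  · subst hz; simp [Qt_u]
  · exact le_of_eq (Qt_row hd hout hin hz)

lemma hitIter_u (S : Set V) (P : V → V → ℝ≥0∞) {x : V} (hx : x ∈ S) (m : ℕ) :
    hitIter P S m x = 0 := by
  cases m with
  | zero => rfl
  | succ m => simp [hitIter, hx]

include hd hout in
lemma hitIter_eq {x : V} (hx : x ≠ u) (m : ℕ) :
    hitIter (stepP E) {u} m x = ∑ k ∈ range m, ∑ z, Pw (Q E u) k x z := by
  induction m generalizing x with
  | zero => rfl
  | succ m ih =>
      have hxS : x ∉ ({u} : Set V) := by simpa using hx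
      have step : ∀ z : V, stepP E x z * hitIter (stepP E) {u} m z
          = ∑ k ∈ range m, ∑ w, Q E u x z * Pw (Q E u) k z w := by
        intro z
        by_cases hz : z = u
        · subst hz
          rw [hitIter_u _ _ (by simp)]
          simp [Q]
        · rw [ih hz]
          have hq : stepP E x z = Q E u x z := by simp [Q, hz]
          rw [hq, Finset.mul_sum]
          exact Finset.sum_congr rfl fun k _ => by rw [Finset.mul_sum]
      rw [show hitIter (stepP E) {u} (m+1) x
            = 1 + ∑' z, stepP E x z * hitIter (stepP E) {u} m z by
          simp [hitIter, hxS]]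
      rw [tsum_fintype]
      simp_rw [step]
      rw [Finset.sum_comm]
      have h2 : ∀ k : ℕ, (∑ z, ∑ w, Q E u x z * Pw (Q E u) k z w)
          = ∑ w, Pw (Q E u) (k+1) x w := by
        intro k
        rw [Finset.sum_comm]
        rfl
      simp_rw [h2]
      have h1 : (1 : ℝ≥0∞) = ∑ z, Pw (Q E u) 0 x z := by
        simp [Pw]
      rw [Finset.sum_range_succ' (fun k => ∑ z, Pw (Q E u) k x z) m]
      rw [← h1, add_comm]

include hd hout in
lemma hitExp_eq {x : V} (hx : x ≠ u) :
    hitExp (stepP E) {u} x = ∑' k, ∑ z, Pw (Q E u) k x z := by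
  rw [hitExp, ENNReal.tsum_eq_iSup_nat]
  exact iSup_congr fun m => hitIter_eq hd hout hx m

/-- first-passage kernel to `x` in the `Qt` chain -/
noncomputable def FP (E' : V → V → ℕ) (u' x : V) : ℕ → V → ℝ≥0∞
  | 0 => fun z => if z = x then 1 else 0
  | (j+1) => fun z => if z = x then 0 else ∑ w, Qt E' u' z w * FP E' u' x j w

lemma FP_self_succ (x : V) (j : ℕ) : FP E u x (j+1) x = 0 := by simp [FP]

lemma FP_decomp (x : V) (k : ℕ) (z : V) :
    Pw (Qt E u) k z x = ∑ j ∈ range (k+1), FP E u x j z * Pw (Qt E u) (k-j) x x := by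
  induction k generalizing z with
  | zero => by_cases hz : z = x <;> simp [Pw, FP, hz]
  | succ k ih =>
      by_cases hz : z = x
      · subst hz
        rw [Finset.sum_range_succ' (fun j => FP E u z j z * Pw (Qt E u) (k+1-j) z z) (k+1)]
        simp [FP_self_succ, FP]
      · show ∑ w, Qt E u z w * Pw (Qt E u) k w x = _
        rw [Finset.sum_range_succ' (fun j => FP E u x j z * Pw (Qt E u) (k+1-j) x x) (k+1)]
        have h0 : FP E u x 0 z = 0 := by simp [FP, hz]
        rw [h0]
        simp only [zero_mul, add_zero]
        calc ∑ w, Qt E u z w * Pw (Qt E u) k w x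
            = ∑ w, Qt E u z w * ∑ j ∈ range (k+1), FP E u x j w * Pw (Qt E u) (k-j) x x := by
              simp_rw [ih]
          _ = ∑ w, ∑ j ∈ range (k+1), Qt E u z w * (FP E u x j w * Pw (Qt E u) (k-j) x x) := by
              simp_rw [Finset.mul_sum]
          _ = ∑ j ∈ range (k+1), (∑ w, Qt E u z w * FP E u x j w) * Pw (Qt E u) (k-j) x x := by
              rw [Finset.sum_comm]; simp_rw [Finset.sum_mul, mul_assoc]
          _ = ∑ j ∈ range (k+1), FP E u x (j+1) z * Pw (Qt E u) (k+1-(j+1)) x x := by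
              refine Finset.sum_congr rfl fun j _ => ?_
              rw [show FP E u x (j+1) z = ∑ w, Qt E u z w * FP E u x j w by simp [FP, hz]]
              rw [Nat.succ_sub_succ]

include hd hout hin in
lemma FP_subprob (x : V) (K : ℕ) (z : V) : ∑ j ∈ range (K+1), FP E u x j z ≤ 1 := by
  induction K generalizing z with
  | zero =>
      by_cases hz : z = x <;> simp [FP, hz]
  | succ K ih =>
      rw [Finset.sum_range_succ' (fun j => FP E u x j z) (K+1)]
      by_cases hz : z = x
      · subst hz
        simp [FP_self_succ, FP]
      · have h0 : FP E u x 0 z = 0 := by simp [FP, hz]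
        rw [h0, add_zero]
        have hstep : ∀ j : ℕ, FP E u x (j+1) z = ∑ w, Qt E u z w * FP E u x j w := by
          intro j; simp [FP, hz]
        simp_rw [hstep]
        rw [Finset.sum_comm]
        calc ∑ w, ∑ j ∈ range (K+1), Qt E u z w * FP E u x j w
            = ∑ w, Qt E u z w * ∑ j ∈ range (K+1), FP E u x j w := by
              simp_rw [Finset.mul_sum]
          _ ≤ ∑ w, Qt E u z w * 1 := by
              exact Finset.sum_le_sum fun w _ => mul_le_mul_right (ih w) _
          _ ≤ 1 := by
              simp_rw [mul_one]
              exact Qt_row_le hd hout hin z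

include hd hout hin in
lemma col_le_diag (x z : V) :
    ∑' k, Pw (Qt E u) k z x ≤ ∑' k, Pw (Qt E u) k x x := by
  set A := ∑' k, Pw (Qt E u) k x x with hA
  rw [ENNReal.tsum_eq_iSup_nat]
  refine iSup_le fun M => ?_
  have key : ∀ M : ℕ, ∑ k ∈ range M, Pw (Qt E u) k z x
      = ∑ j ∈ range M, FP E u x j z * ∑ i ∈ range (M - j), Pw (Qt E u) i x x := by
    intro M
    induction M with
    | zero => simp
    | succ M ihM =>
        rw [Finset.sum_range_succ, ihM, FP_decomp]
        have hR : ∀ j ∈ range (M+1), FP E u x j z * ∑ i ∈ range (M+1-j), Pw (Qt E u) i x x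
            = FP E u x j z * ∑ i ∈ range (M-j), Pw (Qt E u) i x x
              + FP E u x j z * Pw (Qt E u) (M-j) x x := by
          intro j hj
          rw [show M+1-j = (M-j)+1 from Nat.succ_sub (Nat.lt_succ_iff.1 (mem_range.1 hj))]
          rw [Finset.sum_range_succ, mul_add]
        rw [Finset.sum_congr rfl hR, Finset.sum_add_distrib]
        congr 1
        rw [Finset.sum_range_succ _ M]
        simp
  rw [key]
  calc ∑ j ∈ range M, FP E u x j z * ∑ i ∈ range (M - j), Pw (Qt E u) i x x
      ≤ ∑ j ∈ range M, FP E u x j z * A := by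
        refine Finset.sum_le_sum fun j _ => mul_le_mul_right ?_ _
        exact ENNReal.sum_le_tsum _
    _ = (∑ j ∈ range M, FP E u x j z) * A := by rw [Finset.sum_mul]
    _ ≤ 1 * A := by
        refine mul_le_mul_left ?_ A
        cases M with
        | zero => simp
        | succ M => exact FP_subprob hd hout hin x M z
    _ = A := one_mul A

include hd hout in
lemma diag_le (x : V) (hxu : 0 < E x u) :
    ∑' k, Pw (Q E u) k x x ≤ (d : ℝ≥0∞) := by
  set s : ℕ → ℝ≥0∞ := fun k => ∑ z, Pw (Q E u) k x z with hs
  have hstep : ∀ k : ℕ, (∑ w, Pw (Q E u) k x w * stepP E w u) + s (k+1) = s k := by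
    intro k
    have h1 : s (k+1) = ∑ w, Pw (Q E u) k x w * ∑ z, Q E u w z := by
      show (∑ z, Pw (Q E u) (k+1) x z) = _
      simp_rw [Pw_succ_right, Finset.mul_sum]
      exact Finset.sum_comm
    rw [h1, ← Finset.sum_add_distrib]
    have : ∀ w : V, Pw (Q E u) k x w * stepP E w u + Pw (Q E u) k x w * (∑ z, Q E u w z)
        = Pw (Q E u) k x w := by
      intro w
      rw [← mul_add]
      rw [show stepP E w u + ∑ z, Q E u w z = 1 by rw [add_comm]; exact Q_row hd hout w]
      exact mul_one _
    simp_rw [this]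
    rfl
  have htel : ∀ M : ℕ, (∑ k ∈ range M, Pw (Q E u) k x x * stepP E x u) + s M ≤ 1 := by
    intro M
    induction M with
    | zero =>
        simp only [Finset.range_zero, Finset.sum_empty, zero_add]
        show (∑ z, Pw (Q E u) 0 x z) ≤ 1
        simp [Pw]
    | succ M ihM =>
        rw [Finset.sum_range_succ, add_assoc]
        have h2 : Pw (Q E u) M x x * stepP E x u + s (M+1) ≤ s M := by
          rw [← hstep M]
        
          exact add_le_add_left
            (Finset.single_le_sum (f := fun w => Pw (Q E u) M x w * stepP E w u)
              (fun w _ => zero_le) (mem_univ x)) _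
        exact le_trans (add_le_add_right h2 _) ihM
  have hp : (d : ℝ≥0∞)⁻¹ ≤ stepP E x u := by
    rw [stepP, hout, ENNReal.div_eq_inv_mul]
    calc (d : ℝ≥0∞)⁻¹ = (d : ℝ≥0∞)⁻¹ * 1 := (mul_one _).symm
      _ ≤ (d : ℝ≥0∞)⁻¹ * (E x u : ℝ≥0∞) := by
          exact mul_le_mul_right (by exact_mod_cast Nat.one_le_cast.2 hxu) _
  have hsum : ∀ M : ℕ, ∑ k ∈ range M, Pw (Q E u) k x x ≤ (d : ℝ≥0∞) := by
    intro M
    have h1 : (∑ k ∈ range M, Pw (Q E u) k x x) * (d : ℝ≥0∞)⁻¹ ≤ 1 := by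
      rw [Finset.sum_mul]
      calc ∑ k ∈ range M, Pw (Q E u) k x x * (d : ℝ≥0∞)⁻¹
          ≤ ∑ k ∈ range M, Pw (Q E u) k x x * stepP E x u :=
            Finset.sum_le_sum fun k _ => mul_le_mul_right hp _
        _ ≤ (∑ k ∈ range M, Pw (Q E u) k x x * stepP E x u) + s M := le_self_add
        _ ≤ 1 := htel M
    rw [← div_eq_mul_inv] at h1
    have := (ENNReal.div_le_iff (dcast_ne_zero hd) (ENNReal.natCast_ne_top d)).1 h1
    simpa using this
  rw [ENNReal.tsum_eq_iSup_nat]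
  exact iSup_le hsum

lemma Pw_Qt_u {x : V} (hx : x ≠ u) (k : ℕ) : Pw (Qt E u) k u x = 0 := by
  cases k with
  | zero => simp [Pw, hx, Ne.symm hx]
  | succ k =>
      show ∑ w, Qt E u u w * Pw (Qt E u) k w x = 0
      simp [Qt_u]

include hd hout hin in
lemma main_bound {x : V} (hx : x ≠ u) (hxu : 0 < E x u) :
    hitExp (stepP E) {u} x ≤ ((Fintype.card V - 1 : ℕ) : ℝ≥0∞) * (d : ℝ≥0∞) := by
  rw [hitExp_eq hd hout hx]
  have hswap : ∑' k, ∑ z, Pw (Q E u) k x z = ∑ z, ∑' k, Pw (Q E u) k x z :=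
    Summable.tsum_finsetSum fun z _ => ENNReal.summable
  rw [hswap]
  have htrans : ∀ (z : V) (k : ℕ), Pw (Q E u) k x z = Pw (Qt E u) k z x := by
    intro z k
    exact Pw_transpose (Q E u) k x z
  simp_rw [htrans]
  have hbound : ∀ z ∈ univ.erase u, ∑' k, Pw (Qt E u) k z x ≤ (d : ℝ≥0∞) := by
    intro z _
    refine le_trans (col_le_diag hd hout hin x z) ?_
    have : ∀ k : ℕ, Pw (Qt E u) k x x = Pw (Q E u) k x x := fun k =>
      (Pw_transpose (Q E u) k x x).symm
    simp_rw [this]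
    exact diag_le hd hout x hxu
  have hu0 : ∑' k, Pw (Qt E u) k u x = 0 := by
    simp [Pw_Qt_u hx]
  rw [← Finset.sum_erase_add _ _ (mem_univ u), hu0, add_zero]
  calc ∑ z ∈ univ.erase u, ∑' k, Pw (Qt E u) k z x
      ≤ (univ.erase u).card • (d : ℝ≥0∞) := Finset.sum_le_card_nsmul _ _ _ hbound
    _ = ((univ.erase u).card : ℝ≥0∞) * (d : ℝ≥0∞) := nsmul_eq_mul _ _
    _ = ((Fintype.card V - 1 : ℕ) : ℝ≥0∞) * (d : ℝ≥0∞) := by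
        rw [Finset.card_erase_of_mem (mem_univ u), Finset.card_univ]

end Main

end RWAux

/-- Expected hitting time of `u` started from a measure supported on the
in-neighbours of `u`, in a strongly connected multigraph on `n` vertices in which
every vertex has indegree and outdegree `d ≥ 2`, is at most `n*d − d`. -/
theorem hitting_from_in_neighbours
    {V : Type*} [Fintype V] (E : V → V → ℕ) (d : ℕ) (hd : 2 ≤ d)
    (hout : ∀ x : V, outdeg E x = d)
    (hin : ∀ x : V, indeg E x = d)
    (hsc : ∀ x y : V, Relation.ReflTransGen (fun a b => 0 < E a b) x y)
    (u : V) (μ : V → ℝ≥0∞)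
    (hprob : ∑ x, μ x = 1)
    (hsupp : ∀ x : V, μ x ≠ 0 → 0 < E x u) :
    ∑ x, μ x * hitExp (stepP E) {u} x ≤ ((Fintype.card V * d - d : ℕ) : ℝ≥0∞) := by
  classical
  have hcast : ((Fintype.card V * d - d : ℕ) : ℝ≥0∞)
      = ((Fintype.card V - 1 : ℕ) : ℝ≥0∞) * (d : ℝ≥0∞) := by
    rw [← Nat.cast_mul, Nat.sub_one_mul]
  rw [hcast]
  set C := ((Fintype.card V - 1 : ℕ) : ℝ≥0∞) * (d : ℝ≥0∞) with hC
  calc ∑ x, μ x * hitExp (stepP E) {u} x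
      ≤ ∑ x, μ x * C := by
        refine Finset.sum_le_sum fun x _ => ?_
        by_cases hμ : μ x = 0
        · simp [hμ]
        · refine mul_le_mul_right ?_ _
          by_cases hx : x = u
          · have : hitExp (stepP E) {u} x = 0 := by
              rw [hitExp]
              refine le_antisymm (iSup_le fun m => ?_) zero_le
              rw [RWAux.hitIter_u ({u} : Set V) (stepP E) (by simp [hx]) m]
            rw [this]; exact zero_le
          · exact RWAux.main_bound hd hout hin hx (hsupp x hμ)
    _ = C := by rw [← Finset.sum_mul, hprob, one_mul]
end

section
/- Let σ be a permutation of {0,…,n}. Define the Markov chain X^σ on {0,…,n}: from a state k with 0 < k < n it jumps to σ(k+1) or σ(k−1) each with probability 1/2; from 0 it jumps to σ(0) or σ(1) each with probability 1/2; from n it jumps to σ(n) or σ(n−1) each with probability 1/2. Then X^σ is an irreducible Markov chain. -/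
open scoped ENNReal Classical

/-- Transition kernel of the permuted random walk `X^σ` on `{0,…,n}`: from an
interior `k` it jumps to `σ(k+1)` or `σ(k−1)` equally likely, from `0` to `σ(0)` or
`σ(1)` equally likely, and from `n` to `σ(n)` or `σ(n−1)` equally likely. -/
noncomputable def permP {n : ℕ} (σ : Equiv.Perm (Fin (n + 1))) (k l : Fin (n + 1)) :
    ℝ≥0∞ :=
  (if l = σ ⟨k.val - 1, lt_of_le_of_lt (Nat.sub_le _ _) k.isLt⟩ then 1 / 2 else 0)
  + (if l = σ ⟨min (k.val + 1) n, Nat.lt_succ_of_le (min_le_right _ _)⟩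
      then 1 / 2 else 0)

namespace PermWalkAux

variable {n : ℕ}

def pr (k : Fin (n+1)) : Fin (n+1) :=
  ⟨k.val - 1, lt_of_le_of_lt (Nat.sub_le _ _) k.isLt⟩

def su (k : Fin (n+1)) : Fin (n+1) :=
  ⟨min (k.val + 1) n, Nat.lt_succ_of_le (min_le_right _ _)⟩

def tgt (e : Fin (n+1) × Bool) : Fin (n+1) := if e.2 then su e.1 else pr e.1

variable (σ : Equiv.Perm (Fin (n + 1)))

lemma permP_eq (k l : Fin (n+1)) :
    permP σ k l = (if l = σ (pr k) then 1/2 else 0) + (if l = σ (su k) then 1/2 else 0) := rfl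

lemma permP_pos_iff (k l : Fin (n+1)) :
    0 < permP σ k l ↔ (l = σ (pr k) ∨ l = σ (su k)) := by
  rw [permP_eq]
  constructor
  · intro h
    by_contra hc
    push_neg at hc
    rw [if_neg hc.1, if_neg hc.2] at h
    simp at h
  · intro h
    have h2 : (0:ℝ≥0∞) < 1/2 := by norm_num
    rcases h with h | h
    · rw [if_pos h]
      exact lt_of_lt_of_le h2 le_self_add
    · rw [if_pos h]
      exact lt_of_lt_of_le h2 le_add_self

def psi (j : Fin (n+1)) : Bool → Fin (n+1) × Bool
  | false => if j.val = 0 then (⟨0, Nat.succ_pos n⟩, false)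
      else (⟨j.val - 1, lt_of_le_of_lt (Nat.sub_le _ _) j.isLt⟩, true)
  | true => if h : j.val = n then (⟨n, Nat.lt_succ_self n⟩, true)
      else (⟨j.val + 1, by have := j.isLt; omega⟩, false)

lemma tgt_eq_cases (j : Fin (n+1)) (e : Fin (n+1) × Bool) (he : tgt e = j) :
    e = psi j false ∨ e = psi j true := by
  obtain ⟨k, b⟩ := e
  have hk := k.isLt
  have hj := j.isLt
  cases b with
  | false =>
    have hv : k.val - 1 = j.val := congrArg Fin.val he
    rcases Nat.eq_zero_or_pos k.val with h0 | h1
    · left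
      have hj0 : j.val = 0 := by omega
      simp only [psi, hj0, if_pos, Prod.mk.injEq, Fin.ext_iff]
      exact ⟨by omega, trivial⟩
    · right
      have hjn : j.val ≠ n := by omega
      simp only [psi, dif_neg hjn, Prod.mk.injEq, Fin.ext_iff]
      exact ⟨by omega, trivial⟩
  | true =>
    have hv : min (k.val + 1) n = j.val := congrArg Fin.val he
    by_cases hn : k.val + 1 ≤ n
    · left
      have hj0 : j.val ≠ 0 := by omega
      simp only [psi, if_neg hj0, Prod.mk.injEq, Fin.ext_iff]
      exact ⟨by omega, trivial⟩
    · right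
      have hjn : j.val = n := by omega
      simp only [psi, dif_pos hjn, Prod.mk.injEq, Fin.ext_iff]
      exact ⟨by omega, trivial⟩


/-- local edge multiplicity -/
def EE (k l : Fin (n+1)) : ℕ :=
  (if l = σ (pr k) then 1 else 0) + (if l = σ (su k) then 1 else 0)

lemma EE_pos_iff (k l : Fin (n+1)) : 0 < EE σ k l ↔ (l = σ (pr k) ∨ l = σ (su k)) := by
  unfold EE
  split <;> split <;> simp_all

lemma EE_out (k : Fin (n+1)) : ∑ l, EE σ k l = 2 := by
  unfold EE
  rw [Finset.sum_add_distrib]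
  simp

lemma EE_in (l : Fin (n+1)) : ∑ k, EE σ k l ≤ 2 := by
  unfold EE
  have h1 : ∑ k, ((if l = σ (pr k) then 1 else 0) + (if l = σ (su k) then 1 else 0))
      = ∑ e : Fin (n+1) × Bool, (if l = σ (tgt e) then 1 else 0) := by
    rw [Fintype.sum_prod_type]
    refine Finset.sum_congr rfl fun k _ => ?_
    rw [Fintype.sum_bool]
    simp [tgt, add_comm]
  rw [h1]
  rw [← Finset.card_filter]
  have h2 : (Finset.univ.filter (fun e : Fin (n+1) × Bool => l = σ (tgt e)))
      ⊆ {psi (σ.symm l) false, psi (σ.symm l) true} := by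
    intro e he
    simp only [Finset.mem_filter] at he
    have : tgt e = σ.symm l := by
      have := he.2
      exact (Equiv.eq_symm_apply σ).mpr this.symm
    rcases tgt_eq_cases _ e this with h | h <;> simp [h]
  calc (Finset.univ.filter (fun e : Fin (n+1) × Bool => l = σ (tgt e))).card
      ≤ ({psi (σ.symm l) false, psi (σ.symm l) true} : Finset _).card := Finset.card_le_card h2
    _ ≤ 2 := by
        apply le_trans (Finset.card_insert_le _ _)
        simp

lemma backward (S : Fin (n+1) → Prop)
    (hFwd : ∀ k, S k → S (σ (pr k)) ∧ S (σ (su k))) :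
    ∀ k l, S l → (l = σ (pr k) ∨ l = σ (su k)) → S k := by
  classical
  set F : Finset (Fin (n+1)) := Finset.univ.filter S with hF
  have hmem : ∀ z, z ∈ F ↔ S z := by intro z; simp [hF]
  have h1 : ∀ k ∈ F, ∑ l ∈ F, EE σ k l = 2 := by
    intro k hk
    rw [← EE_out σ k]
    apply Finset.sum_subset (Finset.subset_univ F)
    intro l _ hl
    by_contra hne
    have hpos : 0 < EE σ k l := Nat.pos_of_ne_zero hne
    rcases (EE_pos_iff σ k l).1 hpos with h | h
    · exact hl ((hmem l).2 (h ▸ (hFwd k ((hmem k).1 hk)).1))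
    · exact hl ((hmem l).2 (h ▸ (hFwd k ((hmem k).1 hk)).2))
  have hA : ∑ k ∈ F, ∑ l ∈ F, EE σ k l = 2 * F.card := by
    rw [Finset.sum_congr rfl h1]
    simp [mul_comm]
  have hIn : ∑ l ∈ F, ∑ k, EE σ k l ≤ 2 * F.card := by
    refine le_trans (Finset.sum_le_sum fun l _ => EE_in σ l) ?_
    simp [mul_comm]
  have h3 : ∑ l ∈ F, ∑ k ∈ F, EE σ k l = 2 * F.card := by
    rw [Finset.sum_comm]; exact hA
  have hkey : ∑ l ∈ F, ∑ k ∈ Fᶜ, EE σ k l = 0 := by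
    have h4 : ∑ l ∈ F, (∑ k ∈ F, EE σ k l + ∑ k ∈ Fᶜ, EE σ k l) ≤ 2 * F.card := by
      have : ∀ l, ∑ k ∈ F, EE σ k l + ∑ k ∈ Fᶜ, EE σ k l = ∑ k, EE σ k l :=
        fun l => Finset.sum_add_sum_compl F _
      calc ∑ l ∈ F, (∑ k ∈ F, EE σ k l + ∑ k ∈ Fᶜ, EE σ k l)
          = ∑ l ∈ F, ∑ k, EE σ k l := Finset.sum_congr rfl fun l _ => this l
        _ ≤ 2 * F.card := hIn
    rw [Finset.sum_add_distrib, h3] at h4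
    omega
  intro k l hl hedge
  by_contra hk
  have hkF : k ∈ Fᶜ := by simp [hF, hk]
  have hlF : l ∈ F := (hmem l).2 hl
  have hzero : EE σ k l = 0 := by
    rw [Finset.sum_eq_zero_iff] at hkey
    have := hkey l hlF
    rw [Finset.sum_eq_zero_iff] at this
    exact this k hkF
  have : 0 < EE σ k l := (EE_pos_iff σ k l).2 hedge
  omega

end PermWalkAux

open PermWalkAux

/-- The permuted random walk `X^σ` is irreducible: every state is reachable from
every state with positive probability in some number of steps. -/
theorem permuted_walk_irreducible {n : ℕ} (σ : Equiv.Perm (Fin (n + 1))) :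
    ∀ x y : Fin (n + 1),
      Relation.ReflTransGen (fun a b => 0 < permP σ a b) x y := by
  intro x y
  set S : Fin (n+1) → Prop :=
    fun z => Relation.ReflTransGen (fun a b => 0 < permP σ a b) x z with hSdef
  have hFwd : ∀ k, S k → S (σ (pr k)) ∧ S (σ (su k)) := by
    intro k hk
    exact ⟨hk.tail ((permP_pos_iff σ k _).2 (Or.inl rfl)),
      hk.tail ((permP_pos_iff σ k _).2 (Or.inr rfl))⟩
  have hBack := backward σ S hFwd
  have hpr1 : ∀ (v : ℕ) (h : v + 1 < n + 1),
      (pr (⟨v+1, h⟩ : Fin (n+1))) = ⟨v, by omega⟩ :=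
    fun v h => Fin.ext (by simp [pr])
  have hpr0 : (pr (⟨0, Nat.succ_pos n⟩ : Fin (n+1))) = ⟨0, Nat.succ_pos n⟩ :=
    Fin.ext (by simp [pr])
  have hsu1 : ∀ (v : ℕ) (h : v + 1 ≤ n),
      (su (⟨v, by omega⟩ : Fin (n+1))) = ⟨v+1, by omega⟩ :=
    fun v h => Fin.ext (by simp only [su]; omega)
  have hB2 : ∀ (m : ℕ) (h : m + 1 ≤ n), S (σ ⟨m, by omega⟩) → S ⟨m+1, by omega⟩ := by
    intro m h hs
    refine hBack ⟨m+1, by omega⟩ _ hs (Or.inl ?_)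
    rw [hpr1 m (by omega)]
  have hB1 : ∀ (m : ℕ) (h : m + 1 ≤ n), S (σ ⟨m+1, by omega⟩) → S ⟨m, by omega⟩ := by
    intro m h hs
    refine hBack ⟨m, by omega⟩ _ hs (Or.inr ?_)
    rw [hsu1 m h]
  have hB0 : S (σ ⟨0, Nat.succ_pos n⟩) → S ⟨0, Nat.succ_pos n⟩ := by
    intro hs
    refine hBack _ _ hs (Or.inl ?_)
    rw [hpr0]
  have hdesc : ∀ (v : ℕ) (hv : v < n + 1), S ⟨v, hv⟩ → S ⟨0, Nat.succ_pos n⟩ := by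
    intro v
    induction v using Nat.strong_induction_on with
    | _ v ih =>
      rcases v with _ | (_ | w) <;> intro hv hs
      · exact hs
      · have h1 := (hFwd _ hs).1
        rw [hpr1 0 hv] at h1
        exact hB0 h1
      · have h1 := (hFwd _ hs).1
        rw [hpr1 (w+1) hv] at h1
        exact ih w (by omega) (by omega) (hB1 w (by omega) h1)
  have h0 : S ⟨0, Nat.succ_pos n⟩ := by
    have hx : S x := Relation.ReflTransGen.refl
    exact hdesc x.val x.isLt hx
  have hasc : ∀ (v : ℕ) (hv : v < n + 1), S ⟨v, hv⟩ := by
    intro v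
    induction v using Nat.strong_induction_on with
    | _ v ih =>
      rcases v with _ | (_ | w) <;> intro hv
      · exact h0
      · have h1 := (hFwd _ h0).1
        rw [hpr0] at h1
        exact hB2 0 (by omega) h1
      · have hw : S ⟨w, by omega⟩ := ih w (by omega) (by omega)
        have h1 := (hFwd _ hw).2
        rw [hsu1 w (by omega)] at h1
        exact hB2 (w+1) (by omega) h1
  exact hasc y.val y.isLt
end

section
/- Let σ be a permutation of {−n,…,n} and X^σ the Markov chain defined by X^σ_0 = 0, X^σ_{t+1} = σ(X^σ_t + ξ_{t+1}) for X^σ_t ≠ ±n with ξ i.i.d. uniform on {−1,1}, and from ±n jumping to σ(±n) or σ(±n ∓ 1) equally likely. If τ is the first hitting time of {−n, n}, then E_0[τ] ≤ 4n² + 6n + 2. -/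
open scoped ENNReal Classical

namespace PWalk

variable {V : Type*} [Fintype V] [DecidableEq V]
set_option linter.unusedSectionVars false

open Finset

/-- abstract two-out-neighbor kernel -/
noncomputable def kern (a b : V → V) (k l : V) : ℝ≥0∞ :=
  (if l = a k then 1 / 2 else 0) + (if l = b k then 1 / 2 else 0)

lemma tsum_kern_mul (a b : V → V) (f : V → ℝ≥0∞) (k : V) :
    ∑' z, kern a b k z * f z = f (a k) / 2 + f (b k) / 2 := by
  rw [tsum_fintype]
  have : ∀ z, kern a b k z * f z
      = (if z = a k then f z / 2 else 0) + (if z = b k then f z / 2 else 0) := by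
    intro z
    simp only [kern, add_mul, ite_mul, zero_mul, ENNReal.div_eq_inv_mul, one_mul]
    ring_nf
  simp only [this, Finset.sum_add_distrib, Finset.sum_ite_eq', Finset.mem_univ, if_true]

lemma hitIter_mono {P : V → V → ℝ≥0∞} {S : Set V} :
    ∀ m, ∀ x, hitIter P S m x ≤ hitIter P S (m + 1) x := by
  intro m
  induction m with
  | zero => intro x; simp [hitIter]
  | succ m ih =>
    intro x
    simp only [hitIter]
    split
    · exact le_rfl
    · gcongr with z
      exact ih z

lemma hitIter_mono' {P : V → V → ℝ≥0∞} {S : Set V} {m m' : ℕ} (h : m ≤ m') (x : V) :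
    hitIter P S m x ≤ hitIter P S m' x := by
  induction m' with
  | zero =>
    have hm : m = 0 := by omega
    subst hm; exact le_rfl
  | succ m' ih =>
    rcases Nat.lt_or_ge m (m' + 1) with h' | h'
    · exact le_trans (ih (by omega)) (hitIter_mono m' x)
    · have : m = m' + 1 := by omega
      subst this; exact le_rfl

lemma hitExp_mem {P : V → V → ℝ≥0∞} {S : Set V} {x : V} (hx : x ∈ S) :
    hitExp P S x = 0 := by
  refine le_antisymm (iSup_le fun m => ?_) zero_le
  cases m with
  | zero => simp [hitIter]
  | succ m => simp [hitIter, hx]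

lemma hitExp_eq {a b : V → V} {S : Set V} {x : V} (hx : x ∉ S) :
    hitExp (kern a b) S x
      = 1 + (hitExp (kern a b) S (a x) / 2 + hitExp (kern a b) S (b x) / 2) := by
  have h1 : hitExp (kern a b) S x = ⨆ m, hitIter (kern a b) S (m + 1) x := by
    refine le_antisymm (iSup_le fun m => ?_) (iSup_le fun m => le_iSup_of_le (m + 1) (le_rfl))
    exact le_iSup_of_le m (hitIter_mono m x)
  rw [h1]
  have h2 : ∀ m, hitIter (kern a b) S (m + 1) x
      = 1 + (hitIter (kern a b) S m (a x) / 2 + hitIter (kern a b) S m (b x) / 2) := by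
    intro m
    simp only [hitIter, hx, if_false]
    rw [tsum_kern_mul]
  simp only [h2]
  rw [← ENNReal.add_iSup]
  congr 1
  have hmonoa : Monotone (fun m => hitIter (kern a b) S m (a x) / 2) := by
    intro i j hij
    exact ENNReal.div_le_div_right (hitIter_mono' hij _) _
  have hmonob : Monotone (fun m => hitIter (kern a b) S m (b x) / 2) := by
    intro i j hij
    exact ENNReal.div_le_div_right (hitIter_mono' hij _) _
  rw [← ENNReal.iSup_add_iSup_of_monotone hmonoa hmonob]
  unfold hitExp
  rw [ENNReal.iSup_div, ENNReal.iSup_div]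

lemma hitExp_le_super {a b : V → V} {S : Set V} (g : V → ℝ≥0∞)
    (hg : ∀ x, x ∉ S → 1 + (g (a x) / 2 + g (b x) / 2) ≤ g x) (x : V) :
    hitExp (kern a b) S x ≤ g x := by
  refine iSup_le fun m => ?_
  induction m generalizing x with
  | zero => simp [hitIter]
  | succ m ih =>
    simp only [hitIter]
    split
    · exact zero_le
    · rename_i hx
      rw [tsum_kern_mul]
      refine le_trans ?_ (hg x hx)
      gcongr <;> [exact ih (a x); exact ih (b x)]


open Finset
variable {V : Type*} [Fintype V] [DecidableEq V]
set_option linter.unusedSectionVars false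

lemma sum_comp₂ {M : Type*} [AddCommMonoid M] (a b : V → V)
    (hdeg : ∀ l, ((univ.filter fun k => a k = l).card
      + (univ.filter fun k => b k = l).card) = 2)
    (f : V → M) :
    ∑ k, (f (a k) + f (b k)) = 2 • ∑ l, f l := by
  have ha : ∀ (c : V → V), ∑ k, f (c k)
      = ∑ l, (univ.filter fun k => c k = l).card • f l := by
    intro c
    rw [Finset.sum_comp f c]
    refine Finset.sum_subset (Finset.subset_univ _) ?_
    intro l _ hl
    have : (univ.filter fun k => c k = l) = ∅ := by
      rw [Finset.filter_eq_empty_iff]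
      intro k _ hk
      exact hl (Finset.mem_image.mpr ⟨k, Finset.mem_univ k, hk⟩)
    rw [this]
    simp
  rw [Finset.sum_add_distrib, ha a, ha b, ← Finset.sum_add_distrib, smul_sum]
  refine Finset.sum_congr rfl fun l _ => ?_
  rw [← add_nsmul, hdeg l]

/-- number of edges leaving `A` -/
noncomputable def eOut (a b : V → V) (A : Finset V) : ℕ :=
  ∑ k ∈ A, ((if a k ∈ A then 0 else 1) + (if b k ∈ A then 0 else 1))

/-- number of edges entering `A` -/
noncomputable def eIn (a b : V → V) (A : Finset V) : ℕ :=
  ∑ k ∈ univ \ A, ((if a k ∈ A then 1 else 0) + (if b k ∈ A then 1 else 0))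

lemma eIn_eq_eOut (a b : V → V)
    (hdeg : ∀ l, ((univ.filter fun k => a k = l).card
      + (univ.filter fun k => b k = l).card) = 2) (A : Finset V) :
    eIn a b A = eOut a b A := by
  have key := sum_comp₂ a b hdeg (fun l => if l ∈ A then (1 : ℕ) else 0)
  have hsum : ∑ l, (if l ∈ A then (1:ℕ) else 0) = A.card := by
    rw [Finset.sum_ite_mem, Finset.univ_inter, Finset.card_eq_sum_ones]
  rw [hsum, smul_eq_mul] at key
  -- split the LHS of key over A and univ \ A
  have hsplit : ∑ k, ((if a k ∈ A then (1:ℕ) else 0) + (if b k ∈ A then 1 else 0))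
      = (∑ k ∈ A, ((if a k ∈ A then (1:ℕ) else 0) + (if b k ∈ A then 1 else 0)))
        + eIn a b A := by
    rw [eIn, ← Finset.sum_add_sum_compl A]
    congr 1
  have hA2 : (∑ k ∈ A, ((if a k ∈ A then (1:ℕ) else 0) + (if b k ∈ A then 1 else 0)))
      + eOut a b A = 2 * A.card := by
    rw [eOut, ← Finset.sum_add_distrib]
    have : ∀ k ∈ A, ((if a k ∈ A then (1:ℕ) else 0) + (if b k ∈ A then 1 else 0))
        + ((if a k ∈ A then 0 else 1) + (if b k ∈ A then 0 else 1)) = 2 := by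
      intro k _
      by_cases h1 : a k ∈ A <;> by_cases h2 : b k ∈ A <;> simp [h1, h2]
    rw [Finset.sum_congr rfl this, Finset.sum_const, smul_eq_mul, mul_comm]
  omega

lemma closed_of_eOut_zero (a b : V → V)
    (hdeg : ∀ l, ((univ.filter fun k => a k = l).card
      + (univ.filter fun k => b k = l).card) = 2) (A : Finset V)
    (h0 : eOut a b A = 0) :
    (∀ k, k ∈ A ↔ a k ∈ A) ∧ (∀ k, k ∈ A ↔ b k ∈ A) := by
  have hIn : eIn a b A = 0 := by rw [eIn_eq_eOut a b hdeg A, h0]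
  have hout : ∀ k ∈ A, a k ∈ A ∧ b k ∈ A := by
    intro k hk
    have := (Finset.sum_eq_zero_iff.mp h0) k hk
    constructor
    · by_contra h; simp [h] at this
    · by_contra h; simp [h] at this
  have hin : ∀ k, k ∉ A → a k ∉ A ∧ b k ∉ A := by
    intro k hk
    have hk' : k ∈ univ \ A := by simp [hk]
    have := (Finset.sum_eq_zero_iff.mp hIn) k hk'
    constructor
    · by_contra h; simp [h] at this
    · by_contra h; simp [h] at this
  constructor
  · intro k
    constructor
    · exact fun hk => (hout k hk).1
    · intro hak
      by_contra hk
      exact (hin k hk).1 hak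
  · intro k
    constructor
    · exact fun hk => (hout k hk).2
    · intro hak
      by_contra hk
      exact (hin k hk).2 hak




/-- sets reachable (towards S) within j steps -/
noncomputable def reach (a b : V → V) (S : Finset V) : ℕ → Finset V
  | 0 => S
  | (j + 1) => reach a b S j ∪ univ.filter
      (fun k => a k ∈ reach a b S j ∨ b k ∈ reach a b S j)

lemma reach_subset_succ (a b : V → V) (S : Finset V) (j : ℕ) :
    reach a b S j ⊆ reach a b S (j + 1) := Finset.subset_union_left

lemma reach_mono (a b : V → V) (S : Finset V) {i j : ℕ} (h : i ≤ j) :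
    reach a b S i ⊆ reach a b S j := by
  induction j with
  | zero => have : i = 0 := by omega
            subst this; exact subset_rfl
  | succ j ih =>
    rcases Nat.lt_or_ge i (j + 1) with h' | h'
    · exact subset_trans (ih (by omega)) (reach_subset_succ a b S j)
    · have : i = j + 1 := by omega
      subst this; exact subset_rfl

lemma reach_univ (a b : V → V) (S : Finset V) (hS : S.Nonempty)
    (hdeg : ∀ l, ((univ.filter fun k => a k = l).card
      + (univ.filter fun k => b k = l).card) = 2)
    (hconn : ∀ A : Finset V, (∀ k, k ∈ A ↔ a k ∈ A) → (∀ k, k ∈ A ↔ b k ∈ A)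
      → A = ∅ ∨ A = univ) :
    reach a b S (Fintype.card V) = univ := by
  have key : ∀ j, reach a b S j = univ ∨ j < (reach a b S j).card := by
    intro j
    induction j with
    | zero =>
      by_cases h : S = univ
      · left; exact h
      · right; simpa [Finset.card_pos, reach] using hS
    | succ j ih =>
      rcases ih with h | h
      · left
        apply Finset.univ_subset_iff.mp
        rw [← h]
        exact reach_subset_succ a b S j
      · by_cases hstab : reach a b S (j + 1) = reach a b S j
        · -- stabilized: the complement of `reach j` is closed, hence empty
          set A : Finset V := univ \ reach a b S j with hA
          have houtA : eOut a b A = 0 := by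
            rw [eOut]
            apply Finset.sum_eq_zero
            intro k hk
            have hk1 : k ∉ reach a b S j := by
              rw [hA] at hk; simp at hk; exact hk
            have hk2 : k ∉ reach a b S (j + 1) := by rw [hstab]; exact hk1
            have hna : a k ∉ reach a b S j ∧ b k ∉ reach a b S j := by
              by_contra hcon
              apply hk2
              rw [reach]
              apply Finset.mem_union_right
              simp only [Finset.mem_filter, Finset.mem_univ, true_and]
              tauto
            have h1 : a k ∈ A := by rw [hA]; simp [hna.1]
            have h2 : b k ∈ A := by rw [hA]; simp [hna.2]
            simp [h1, h2]
          have hclosed := closed_of_eOut_zero a b hdeg A houtA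
          rcases hconn A hclosed.1 hclosed.2 with h0 | h0
          · -- A empty means reach j = univ, hence reach (j+1) = univ
            left
            rw [hstab]
            apply Finset.eq_univ_of_forall
            intro x
            by_contra hx
            have : x ∈ A := by rw [hA]; simp [hx]
            rw [h0] at this
            simp at this
          · -- A = univ contradicts S nonempty
            exfalso
            obtain ⟨s, hs⟩ := hS
            have hsA : s ∈ A := h0 ▸ Finset.mem_univ s
            rw [hA] at hsA
            simp at hsA
            exact hsA (reach_mono a b S (Nat.zero_le j) hs)
        · right
          have hsub : reach a b S j ⊂ reach a b S (j + 1) :=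
            Finset.ssubset_iff_subset_ne.mpr ⟨reach_subset_succ a b S j, fun h => hstab h.symm⟩
          have := Finset.card_lt_card hsub
          omega
  rcases key (Fintype.card V) with h | h
  · exact h
  · exfalso
    have := Finset.card_le_univ (reach a b S (Fintype.card V))
    omega

/-- distance towards `S` -/
noncomputable def dist' (a b : V → V) (S : Finset V) (x : V) : ℕ :=
  sInf {j | x ∈ reach a b S j}


section DistFacts
variable (a b : V → V) (S : Finset V) (hS : S.Nonempty)
    (hdeg : ∀ l, ((univ.filter fun k => a k = l).card
      + (univ.filter fun k => b k = l).card) = 2)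
    (hconn : ∀ A : Finset V, (∀ k, k ∈ A ↔ a k ∈ A) → (∀ k, k ∈ A ↔ b k ∈ A)
      → A = ∅ ∨ A = univ)

include hS hdeg hconn

lemma dist'_nonempty (x : V) : {j | x ∈ reach a b S j}.Nonempty :=
  ⟨Fintype.card V, by
    simp only [Set.mem_setOf_eq, reach_univ a b S hS hdeg hconn]
    exact Finset.mem_univ x⟩

lemma mem_reach_dist' (x : V) : x ∈ reach a b S (dist' a b S x) :=
  Nat.sInf_mem (dist'_nonempty a b S hS hdeg hconn x)

lemma dist'_le_card (x : V) : dist' a b S x ≤ Fintype.card V :=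
  Nat.sInf_le (by
    simp only [Set.mem_setOf_eq, reach_univ a b S hS hdeg hconn]
    exact Finset.mem_univ x)

lemma dist'_pos (x : V) (hx : x ∉ S) : 1 ≤ dist' a b S x := by
  by_contra h
  have h0 : dist' a b S x = 0 := by omega
  have := mem_reach_dist' a b S hS hdeg hconn x
  rw [h0] at this
  exact hx this

lemma dist'_le_succ_a (x : V) : dist' a b S x ≤ dist' a b S (a x) + 1 := by
  apply Nat.sInf_le
  simp only [Set.mem_setOf_eq, reach]
  apply Finset.mem_union_right
  simp only [Finset.mem_filter, Finset.mem_univ, true_and]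
  exact Or.inl (mem_reach_dist' a b S hS hdeg hconn (a x))

lemma dist'_le_succ_b (x : V) : dist' a b S x ≤ dist' a b S (b x) + 1 := by
  apply Nat.sInf_le
  simp only [Set.mem_setOf_eq, reach]
  apply Finset.mem_union_right
  simp only [Finset.mem_filter, Finset.mem_univ, true_and]
  exact Or.inr (mem_reach_dist' a b S hS hdeg hconn (b x))

lemma dist'_step (x : V) (hx : x ∉ S) :
    dist' a b S (a x) + 1 = dist' a b S x ∨ dist' a b S (b x) + 1 = dist' a b S x := by
  have h1 := dist'_pos a b S hS hdeg hconn x hx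
  obtain ⟨j, hj⟩ : ∃ j, dist' a b S x = j + 1 := ⟨dist' a b S x - 1, by omega⟩
  have hmem := mem_reach_dist' a b S hS hdeg hconn x
  rw [hj] at hmem
  have hnot : x ∉ reach a b S j := by
    intro hcon
    have := Nat.sInf_le (s := {j' | x ∈ reach a b S j'}) hcon
    rw [show sInf {j' | x ∈ reach a b S j'} = dist' a b S x from rfl, hj] at this
    omega
  rw [reach] at hmem
  rcases Finset.mem_union.mp hmem with h | h
  · exact absurd h hnot
  · simp only [Finset.mem_filter, Finset.mem_univ, true_and] at h
    rcases h with h | h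
    · left
      have hle : dist' a b S (a x) ≤ j := Nat.sInf_le h
      have := dist'_le_succ_a a b S hS hdeg hconn x
      omega
    · right
      have hle : dist' a b S (b x) ≤ j := Nat.sInf_le h
      have := dist'_le_succ_b a b S hS hdeg hconn x
      omega

/-- the crude finiteness supersolution, in `ℕ` -/
lemma super_nat (x : V) (hx : x ∉ S) :
    2 + (2 ^ (Fintype.card V + 1) - 2 ^ (Fintype.card V + 1 - dist' a b S (a x)))
      + (2 ^ (Fintype.card V + 1) - 2 ^ (Fintype.card V + 1 - dist' a b S (b x)))
      ≤ 2 * (2 ^ (Fintype.card V + 1) - 2 ^ (Fintype.card V + 1 - dist' a b S x)) := by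
  set C := Fintype.card V
  set d := dist' a b S x
  set da := dist' a b S (a x)
  set db := dist' a b S (b x)
  have hd1 : 1 ≤ d := dist'_pos a b S hS hdeg hconn x hx
  have hdC : d ≤ C := dist'_le_card a b S hS hdeg hconn x
  have hdaC : da ≤ C := dist'_le_card a b S hS hdeg hconn (a x)
  have hdbC : db ≤ C := dist'_le_card a b S hS hdeg hconn (b x)
  have hxa : 2 ^ (C + 1 - da) ≤ 2 ^ (C + 1) := Nat.pow_le_pow_right (by norm_num) (by omega)
  have hxb : 2 ^ (C + 1 - db) ≤ 2 ^ (C + 1) := Nat.pow_le_pow_right (by norm_num) (by omega)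
  have hxd : 2 ^ (C + 1 - d) ≤ 2 ^ (C + 1) := Nat.pow_le_pow_right (by norm_num) (by omega)
  have key : 2 + 2 * 2 ^ (C + 1 - d) ≤ 2 ^ (C + 1 - da) + 2 ^ (C + 1 - db) := by
    rcases dist'_step a b S hS hdeg hconn x hx with h | h
    · have hea : C + 1 - da = (C + 1 - d) + 1 := by omega
      have heb : 1 ≤ C + 1 - db := by omega
      have h2b : 2 ≤ 2 ^ (C + 1 - db) := by
        calc 2 = 2 ^ 1 := by norm_num
        _ ≤ 2 ^ (C + 1 - db) := Nat.pow_le_pow_right (by norm_num) heb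
      rw [hea, pow_succ]
      omega
    · have hea : C + 1 - db = (C + 1 - d) + 1 := by omega
      have heb : 1 ≤ C + 1 - da := by omega
      have h2b : 2 ≤ 2 ^ (C + 1 - da) := by
        calc 2 = 2 ^ 1 := by norm_num
        _ ≤ 2 ^ (C + 1 - da) := Nat.pow_le_pow_right (by norm_num) heb
      rw [hea, pow_succ]
      omega
  omega

/-- finiteness of the expected hitting time -/
lemma hitExp_lt_top (x : V) :
    hitExp (kern a b) ↑S x ≤ (2 ^ (Fintype.card V + 1) : ℕ) := by
  set C := Fintype.card V
  set g : V → ℝ≥0∞ := fun y =>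
    ((2 ^ (C + 1) - 2 ^ (C + 1 - dist' a b S y) : ℕ) : ℝ≥0∞) with hg
  have hsuper : ∀ y, y ∉ (↑S : Set V) → 1 + (g (a y) / 2 + g (b y) / 2) ≤ g y := by
    intro y hy
    have hy' : y ∉ S := by simpa using hy
    have hnat := super_nat a b S hS hdeg hconn y hy'
    have hcast : (2 : ℝ≥0∞) + g (a y) + g (b y) ≤ 2 * g y := by
      rw [hg]
      simp only
      rw [show (2 : ℝ≥0∞) = ((2 : ℕ) : ℝ≥0∞) by norm_num, ← Nat.cast_add, ← Nat.cast_add,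
        ← Nat.cast_mul]
      exact_mod_cast Nat.cast_le.mpr hnat
    have h2 : (2 : ℝ≥0∞) ≠ 0 := by norm_num
    have h2t : (2 : ℝ≥0∞) ≠ ⊤ := by norm_num
    calc 1 + (g (a y) / 2 + g (b y) / 2)
        = (2 + g (a y) + g (b y)) / 2 := by
          rw [ENNReal.add_div, ENNReal.add_div, ENNReal.div_self h2 h2t, add_assoc]
    _ ≤ (2 * g y) / 2 := by gcongr
    _ = g y := by rw [mul_comm, mul_div_assoc, ENNReal.div_self h2 h2t, mul_one]
  calc hitExp (kern a b) ↑S x ≤ g x := hitExp_le_super g hsuper x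
  _ ≤ (2 ^ (C + 1) : ℕ) := by
      rw [hg]
      exact_mod_cast Nat.cast_le.mpr (Nat.sub_le _ _)

end DistFacts


section RealPart
variable (a b : V → V) (S : Finset V) (hS : S.Nonempty)
    (hdeg : ∀ l, ((univ.filter fun k => a k = l).card
      + (univ.filter fun k => b k = l).card) = 2)
    (hconn : ∀ A : Finset V, (∀ k, k ∈ A ↔ a k ∈ A) → (∀ k, k ∈ A ↔ b k ∈ A)
      → A = ∅ ∨ A = univ)
    (H : V → ℝ)
    (hHeq : ∀ x, x ∉ S → H x = 1 + (H (a x) + H (b x)) / 2)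

include hS hdeg hconn hHeq

/-- the cut lemma: some element of the "high" set is within `2|A|` of the threshold -/
lemma cut_lemma (A : Finset V) (hA : A.Nonempty) (hAS : ∀ v ∈ A, v ∉ S)
    (t : ℝ) (hB : ∀ v, v ∉ A → H v ≤ t) :
    ∃ v ∈ A, H v ≤ t + 2 * A.card := by
  -- the cut sizes
  have hbal : eIn a b A = eOut a b A := eIn_eq_eOut a b hdeg A
  -- the cut is nonempty
  have hpos : 1 ≤ eIn a b A := by
    by_contra hcon
    have h0 : eOut a b A = 0 := by omega
    have hclosed := closed_of_eOut_zero a b hdeg A h0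
    rcases hconn A hclosed.1 hclosed.2 with h | h
    · rw [h] at hA; simp at hA
    · obtain ⟨s, hs⟩ := hS
      exact hAS s (h ▸ Finset.mem_univ s) hs
  -- minimum of H over A
  have hinf := Finset.exists_mem_eq_inf' hA H
  obtain ⟨v, hv, hveq⟩ := hinf
  set u := A.inf' hA H with hu
  refine ⟨v, hv, ?_⟩
  rw [← hveq]
  -- the sums
  set InT : ℝ := ∑ k ∈ univ \ A,
    ((if a k ∈ A then H (a k) else 0) + (if b k ∈ A then H (b k) else 0)) with hInT
  set OutT : ℝ := ∑ k ∈ A,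
    ((if a k ∈ A then 0 else H (a k)) + (if b k ∈ A then 0 else H (b k))) with hOutT
  set SA : ℝ := ∑ k ∈ A,
    ((if a k ∈ A then H (a k) else 0) + (if b k ∈ A then H (b k) else 0)) with hSA
  set SH : ℝ := ∑ k ∈ A, H k with hSH
  -- identity E1
  have E1 : SA + OutT = 2 * SH - 2 * A.card := by
    rw [hSA, hOutT, ← Finset.sum_add_distrib]
    have : ∀ k ∈ A,
        ((if a k ∈ A then H (a k) else 0) + (if b k ∈ A then H (b k) else 0))
        + ((if a k ∈ A then 0 else H (a k)) + (if b k ∈ A then 0 else H (b k)))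
        = 2 * H k - 2 := by
      intro k hk
      have heq := hHeq k (hAS k hk)
      have : (if a k ∈ A then H (a k) else 0) + (if a k ∈ A then 0 else H (a k)) = H (a k) := by
        split <;> ring
      have hb' : (if b k ∈ A then H (b k) else 0) + (if b k ∈ A then 0 else H (b k)) = H (b k) := by
        split <;> ring
      have : H (a k) + H (b k) = 2 * H k - 2 := by
        rw [heq]; ring
      rw [← this]
      split <;> split <;> ring
    rw [Finset.sum_congr rfl this, Finset.sum_sub_distrib, ← Finset.mul_sum,
      Finset.sum_const, nsmul_eq_mul, hSH]
    ring
  -- identity E2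
  have E2 : SA + InT = 2 * SH := by
    have key := sum_comp₂ a b hdeg (fun l => if l ∈ A then H l else 0)
    have hrhs : ∑ l, (if l ∈ A then H l else 0) = SH := by
      rw [Finset.sum_ite_mem, Finset.univ_inter, hSH]
    rw [hrhs, nsmul_eq_mul] at key
    push_cast at key
    rw [← Finset.sum_add_sum_compl A] at key
    have hcompl : Aᶜ = univ \ A := by ext x; simp
    rw [hcompl] at key
    rw [hSA, hInT]
    exact key
  have E3 : InT = 2 * A.card + OutT := by linarith
  -- lower bound on InT
  have hIn_lb : (eIn a b A : ℝ) * u ≤ InT := by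
    rw [hInT, eIn, Nat.cast_sum, Finset.sum_mul]
    apply Finset.sum_le_sum
    intro k hk
    push_cast
    rw [add_mul]
    apply add_le_add
    · split
      · rename_i hmem
        rw [one_mul]
        exact Finset.inf'_le H hmem
      · simp
    · split
      · rename_i hmem
        rw [one_mul]
        exact Finset.inf'_le H hmem
      · simp
  -- upper bound on OutT
  have hOut_ub : OutT ≤ (eOut a b A : ℝ) * t := by
    rw [hOutT, eOut, Nat.cast_sum, Finset.sum_mul]
    apply Finset.sum_le_sum
    intro k hk
    push_cast
    rw [add_mul]
    apply add_le_add
    · split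
      · simp
      · rename_i hmem
        simpa using hB (a k) hmem
    · split
      · simp
      · rename_i hmem
        simpa using hB (b k) hmem
  -- combine
  have hcard_nonneg : (0 : ℝ) ≤ 2 * A.card := by positivity
  have he : (1 : ℝ) ≤ (eIn a b A : ℝ) := by exact_mod_cast hpos
  have hchain : (eIn a b A : ℝ) * u ≤ (eIn a b A : ℝ) * (t + 2 * A.card) := by
    calc (eIn a b A : ℝ) * u ≤ InT := hIn_lb
    _ = 2 * A.card + OutT := E3
    _ ≤ 2 * A.card + (eOut a b A : ℝ) * t := by linarith
    _ = 2 * A.card + (eIn a b A : ℝ) * t := by rw [hbal]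
    _ ≤ (eIn a b A : ℝ) * (2 * A.card) + (eIn a b A : ℝ) * t := by nlinarith
    _ = (eIn a b A : ℝ) * (t + 2 * A.card) := by ring
  have := (mul_le_mul_iff_right₀ (by linarith : (0:ℝ) < (eIn a b A : ℝ))).mp hchain
  linarith

/-- descending induction on the size of the super-level set -/
lemma descent (hH0 : ∀ x ∈ S, H x = 0) :
    ∀ s : ℕ, ∀ t : ℝ, 0 ≤ t → (univ.filter fun v => t < H v).card ≤ s →
      ∀ x, H x ≤ t + s * (s + 1) := by
  intro s
  induction s with
  | zero =>
    intro t ht hcard x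
    simp only [Nat.le_zero, Finset.card_eq_zero, Finset.filter_eq_empty_iff] at hcard
    have := hcard (Finset.mem_univ x)
    push_cast
    simp only [not_lt] at this
    linarith
  | succ s ih =>
    intro t ht hcard x
    set A := univ.filter fun v => t < H v with hAdef
    rcases Finset.eq_empty_or_nonempty A with hA | hA
    · have : ∀ v, ¬ (t < H v) := by
        intro v hv
        have : v ∈ A := by rw [hAdef]; simp [hv]
        rw [hA] at this; simp at this
      have := this x
      push_cast
      have hs : (0:ℝ) ≤ (s+1) * (s+2) := by positivity
      push_cast at hs
      nlinarith [this]
    · have hAS : ∀ v ∈ A, v ∉ S := by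
        intro v hv hvS
        have h1 : t < H v := by
          rw [hAdef] at hv; simp at hv; exact hv
        rw [hH0 v hvS] at h1
        linarith
      have hB : ∀ v, v ∉ A → H v ≤ t := by
        intro v hv
        rw [hAdef] at hv
        simp at hv
        linarith
      obtain ⟨v, hvA, hvle⟩ := cut_lemma a b S hS hdeg hconn H hHeq A hA hAS t hB
      set t' := t + 2 * (s + 1 : ℕ) with ht'
      have hvle' : H v ≤ t' := by
        rw [ht']
        have : (A.card : ℝ) ≤ (s + 1 : ℕ) := by exact_mod_cast hcard
        nlinarith
      have hsub : (univ.filter fun w => t' < H w) ⊆ A.erase v := by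
        intro w hw
        simp only [Finset.mem_filter, Finset.mem_univ, true_and] at hw
        apply Finset.mem_erase.mpr
        constructor
        · rintro rfl
          linarith
        · rw [hAdef]
          simp only [Finset.mem_filter, Finset.mem_univ, true_and]
          have : (0:ℝ) ≤ 2 * (s+1:ℕ) := by positivity
          linarith
      have hcard' : (univ.filter fun w => t' < H w).card ≤ s := by
        calc (univ.filter fun w => t' < H w).card ≤ (A.erase v).card :=
          Finset.card_le_card hsub
        _ ≤ A.card - 1 := by
            rw [Finset.card_erase_of_mem hvA]
        _ ≤ s := by omega
      have ht'0 : 0 ≤ t' := by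
        rw [ht']
        have : (0:ℝ) ≤ 2 * (s+1:ℕ) := by positivity
        linarith
      have := ih t' ht'0 hcard' x
      rw [ht'] at this
      push_cast at this ⊢
      nlinarith [this]

end RealPart


/-- abstract main bound -/
theorem main_bound (a b : V → V) (S : Finset V) (hS : S.Nonempty)
    (hdeg : ∀ l, ((univ.filter fun k => a k = l).card
      + (univ.filter fun k => b k = l).card) = 2)
    (hconn : ∀ A : Finset V, (∀ k, k ∈ A ↔ a k ∈ A) → (∀ k, k ∈ A ↔ b k ∈ A)
      → A = ∅ ∨ A = univ) (x : V) :
    hitExp (kern a b) ↑S x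
      ≤ (((Fintype.card V - S.card) * (Fintype.card V - S.card + 1) : ℕ) : ℝ≥0∞) := by
  set h : V → ℝ≥0∞ := fun y => hitExp (kern a b) ↑S y with hh
  have hfin : ∀ y, h y ≠ ⊤ := by
    intro y
    have := hitExp_lt_top a b S hS hdeg hconn y
    exact ne_top_of_le_ne_top (by simp) this
  set H : V → ℝ := fun y => (h y).toReal with hH
  have hH0 : ∀ y ∈ S, H y = 0 := by
    intro y hy
    rw [hH]
    simp only
    rw [hh]
    simp only
    rw [hitExp_mem (by simpa using hy)]
    simp
  have hdiv : ∀ y : V, h y / 2 ≠ ⊤ := by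
    intro y
    rw [ENNReal.div_eq_inv_mul]
    exact ENNReal.mul_ne_top (by norm_num) (hfin y)
  have hHeq : ∀ y, y ∉ S → H y = 1 + (H (a y) + H (b y)) / 2 := by
    intro y hy
    have heq := hitExp_eq (a := a) (b := b) (S := ↑S) (x := y) (by simpa using hy)
    have step : (h y).toReal = 1 + ((h (a y)).toReal / 2 + (h (b y)).toReal / 2) := by
      rw [hh]
      simp only
      rw [heq]
      rw [ENNReal.toReal_add (by simp) (ENNReal.add_ne_top.mpr ⟨hdiv (a y), hdiv (b y)⟩),
        ENNReal.toReal_add (hdiv (a y)) (hdiv (b y)), ENNReal.toReal_div,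
        ENNReal.toReal_div]
      norm_num
      rfl
    rw [hH]
    simp only
    rw [step]
    ring
  -- apply the descent lemma
  set s : ℕ := Fintype.card V - S.card with hs
  have hcard : (univ.filter fun v => (0:ℝ) < H v).card ≤ s := by
    have hsub : (univ.filter fun v => (0:ℝ) < H v) ⊆ univ \ S := by
      intro v hv
      simp only [Finset.mem_filter, Finset.mem_univ, true_and] at hv
      simp only [Finset.mem_sdiff, Finset.mem_univ, true_and]
      intro hvS
      rw [hH0 v hvS] at hv
      linarith
    calc (univ.filter fun v => (0:ℝ) < H v).card ≤ (univ \ S).card :=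
        Finset.card_le_card hsub
    _ = s := by rw [Finset.card_sdiff_of_subset (Finset.subset_univ S), Finset.card_univ]
  have hdesc := descent a b S hS hdeg hconn H hHeq hH0 s 0 le_rfl hcard x
  rw [zero_add] at hdesc
  -- convert back to ℝ≥0∞
  have : h x ≤ ((s * (s + 1) : ℕ) : ℝ≥0∞) := by
    rw [← ENNReal.ofReal_toReal (hfin x)]
    apply ENNReal.ofReal_le_of_le_toReal
    rw [ENNReal.toReal_natCast]
    push_cast
    push_cast at hdesc
    linarith
  exact this


/-- counting lemma for the truncated predecessor and successor maps on `Fin (N+1)` -/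
lemma count_lemma (N j : ℕ) (hj : j ≤ N) :
    ((univ.filter fun k : Fin (N + 1) => k.val - 1 = j).card
    + (univ.filter fun k : Fin (N + 1) => min (k.val + 1) N = j).card) = 2 := by
  rcases Nat.eq_zero_or_pos N with hN | hN
  · subst hN
    have hj0 : j = 0 := by omega
    subst hj0
    have h1 : (univ.filter fun k : Fin 1 => k.val - 1 = 0) = {(⟨0, by omega⟩ : Fin 1)} := by
      ext ⟨kv, hk⟩
      simp [Fin.ext_iff]
    have h2 : (univ.filter fun k : Fin 1 => min (k.val + 1) 0 = 0)
        = {(⟨0, by omega⟩ : Fin 1)} := by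
      ext ⟨kv, hk⟩
      simp [Fin.ext_iff]
    rw [h1, h2]
    simp
  · rcases Nat.eq_zero_or_pos j with hj0 | hjpos
    · subst hj0
      have h1 : (univ.filter fun k : Fin (N + 1) => k.val - 1 = 0)
          = {(⟨0, by omega⟩ : Fin (N + 1)), (⟨1, by omega⟩ : Fin (N + 1))} := by
        ext ⟨kv, hk⟩
        simp [Fin.ext_iff]
        omega
      have h2 : (univ.filter fun k : Fin (N + 1) => min (k.val + 1) N = 0) = ∅ := by
        rw [Finset.filter_eq_empty_iff]
        intro k _
        omega
      rw [h1, h2]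
      rw [Finset.card_insert_of_notMem (by simp [Fin.ext_iff])]
      simp
    · rcases Nat.lt_or_ge j N with hjN | hjN
      · have h1 : (univ.filter fun k : Fin (N + 1) => k.val - 1 = j)
            = {(⟨j + 1, by omega⟩ : Fin (N + 1))} := by
          ext ⟨kv, hk⟩
          simp [Fin.ext_iff]
          omega
        have h2 : (univ.filter fun k : Fin (N + 1) => min (k.val + 1) N = j)
            = {(⟨j - 1, by omega⟩ : Fin (N + 1))} := by
          ext ⟨kv, hk⟩
          simp [Fin.ext_iff]
          omega
        rw [h1, h2]
        simp
      · have h1 : (univ.filter fun k : Fin (N + 1) => k.val - 1 = j) = ∅ := by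
          rw [Finset.filter_eq_empty_iff]
          intro ⟨kv, hk⟩ _
          simp
          omega
        have h2 : (univ.filter fun k : Fin (N + 1) => min (k.val + 1) N = j)
            = {(⟨N - 1, by omega⟩ : Fin (N + 1)), (⟨N, by omega⟩ : Fin (N + 1))} := by
          ext ⟨kv, hk⟩
          simp [Fin.ext_iff]
          omega
        rw [h1, h2]
        rw [Finset.card_insert_of_notMem (by simp [Fin.ext_iff]; omega)]
        simp

end PWalk

open Finset in
/-- The permuted random walk on `{−n,…,n}` (encoded as `Fin (2n+1)`, with `0 ↔ −n`,
`2n ↔ n` and the start `0` encoded as `n`) exits `{−n, n}` in expected time at most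
`4n² + 6n + 2`. -/
theorem permuted_walk_exit_bound (n : ℕ) (σ : Equiv.Perm (Fin (2 * n + 1))) :
    hitExp (permP σ) ({0, Fin.last (2 * n)} : Set (Fin (2 * n + 1)))
        ⟨n, by omega⟩ ≤ ((4 * n ^ 2 + 6 * n + 2 : ℕ) : ℝ≥0∞) := by
  classical
  set a : Fin (2 * n + 1) → Fin (2 * n + 1) :=
    fun k => σ ⟨k.val - 1, lt_of_le_of_lt (Nat.sub_le _ _) k.isLt⟩ with ha
  set b : Fin (2 * n + 1) → Fin (2 * n + 1) :=
    fun k => σ ⟨min (k.val + 1) (2 * n), Nat.lt_succ_of_le (min_le_right _ _)⟩ with hb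
  have hkern : permP σ = PWalk.kern a b := rfl
  set S : Finset (Fin (2 * n + 1)) := {0, Fin.last (2 * n)} with hSdef
  have hSet : ({0, Fin.last (2 * n)} : Set (Fin (2 * n + 1))) = ↑S := by
    rw [hSdef]
    simp
  have hS : S.Nonempty := ⟨0, by rw [hSdef]; simp⟩
  -- degree hypothesis
  have hdeg : ∀ l, ((univ.filter fun k => a k = l).card
      + (univ.filter fun k => b k = l).card) = 2 := by
    intro l
    set j := σ.symm l with hj
    have ha' : (univ.filter fun k => a k = l)
        = (univ.filter fun k : Fin (2 * n + 1) => k.val - 1 = j.val) := by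
      apply Finset.filter_congr
      intro k _
      rw [ha]
      simp only
      rw [Equiv.apply_eq_iff_eq_symm_apply, ← hj, Fin.ext_iff]
    have hb' : (univ.filter fun k => b k = l)
        = (univ.filter fun k : Fin (2 * n + 1) => min (k.val + 1) (2 * n) = j.val) := by
      apply Finset.filter_congr
      intro k _
      rw [hb]
      simp only
      rw [Equiv.apply_eq_iff_eq_symm_apply, ← hj, Fin.ext_iff]
    rw [ha', hb']
    exact PWalk.count_lemma (2 * n) j.val (by omega)
  -- connectivity hypothesis
  have hconn : ∀ A : Finset (Fin (2 * n + 1)),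
      (∀ k, k ∈ A ↔ a k ∈ A) → (∀ k, k ∈ A ↔ b k ∈ A) → A = ∅ ∨ A = univ := by
    intro A h1 h2
    have key : ∀ k : Fin (2 * n + 1), (a k ∈ A ↔ b k ∈ A) :=
      fun k => (h1 k).symm.trans (h2 k)
    have main : ∀ m, ∀ hm : m < 2 * n + 1,
        ((σ ⟨m, hm⟩ ∈ A) ↔ (σ ⟨0, by omega⟩ ∈ A)) := by
      intro m
      induction m using Nat.strong_induction_on with
      | _ m ih =>
        match m with
        | 0 => intro hm; exact Iff.rfl
        | 1 =>
          intro hm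
          have hk := key ⟨0, by omega⟩
          have e1 : a ⟨0, by omega⟩ = σ ⟨0, by omega⟩ := rfl
          have e2 : b ⟨0, by omega⟩ = σ ⟨1, hm⟩ := by
            rw [hb]
            simp only
            congr 1
            apply Fin.ext
            simp
            omega
          rw [e1, e2] at hk
          exact hk.symm
        | (m + 2) =>
          intro hm
          have hk := key ⟨m + 1, by omega⟩
          have e1 : a ⟨m + 1, by omega⟩ = σ ⟨m, by omega⟩ := rfl
          have e2 : b ⟨m + 1, by omega⟩ = σ ⟨m + 2, hm⟩ := by
            rw [hb]
            simp only
            congr 1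
            apply Fin.ext
            simp
            omega
          rw [e1, e2] at hk
          exact hk.symm.trans (ih m (by omega) (by omega))
    have hall : ∀ l : Fin (2 * n + 1), (l ∈ A ↔ σ ⟨0, by omega⟩ ∈ A) := by
      intro l
      have h := main (σ.symm l).val (σ.symm l).isLt
      have he : (⟨(σ.symm l).val, (σ.symm l).isLt⟩ : Fin (2 * n + 1)) = σ.symm l := rfl
      rw [he] at h
      simpa using h
    by_cases h0 : σ ⟨0, by omega⟩ ∈ A
    · right
      exact Finset.eq_univ_of_forall fun l => (hall l).mpr h0
    · left
      rw [Finset.eq_empty_iff_forall_notMem]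
      exact fun l hl => h0 ((hall l).mp hl)
  -- apply the abstract bound
  rw [hSet, hkern]
  refine le_trans (PWalk.main_bound a b S hS hdeg hconn _) ?_
  have hcardV : Fintype.card (Fin (2 * n + 1)) = 2 * n + 1 := by simp
  rcases Nat.eq_zero_or_pos n with hn | hn
  · subst hn
    have hS1 : S.card = 1 := by
      rw [hSdef]
      decide
    rw [hcardV, hS1]
    simp
  · have hS2 : S.card = 2 := by
      rw [hSdef]
      rw [Finset.card_insert_of_notMem]
      · simp
      · simp only [Finset.mem_singleton]
        intro hcon
        rw [Fin.ext_iff, Fin.val_zero, Fin.val_last] at hcon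
        omega
    rw [hcardV, hS2]
    have hnum : (2 * n + 1 - 2) * (2 * n + 1 - 2 + 1) ≤ 4 * n ^ 2 + 6 * n + 2 := by
      have h1 : 2 * n + 1 - 2 ≤ 2 * n := by omega
      have h2 : 2 * n + 1 - 2 + 1 ≤ 2 * n + 1 := by omega
      calc (2 * n + 1 - 2) * (2 * n + 1 - 2 + 1) ≤ (2 * n) * (2 * n + 1) :=
        Nat.mul_le_mul h1 h2
      _ ≤ 4 * n ^ 2 + 6 * n + 2 := by
          have : (2 * n) * (2 * n + 1) = 4 * n ^ 2 + 2 * n := by ring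
          omega
    exact_mod_cast Nat.cast_le.mpr hnum
end
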